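/- arXiv:1510.00832 — 5 statements merged into one kernel-verified Lean document; each statement's English description precedes it below -/
import Mathlib

section
/- For random variables $X_1, U_2, \ldots, U_N$ such that $U_2,\ldots,U_N \to X_1 \to Y_k$ form a Markov chain for each $k$, and for any subset $\mathcal{S}^c \subseteq \{2,\ldots,N\}$, the identity $I(X_1; U(\mathcal{S}^c)) - \sum_{k\in\mathcal{S}^c} I(U_k; U(\mathcal{S}^c_k), X_1 \mid Y_k) = \sum_{k\in\mathcal{S}^c}[I(U_k; Y_k) - I(U_k; U(\mathcal{S}^c_k))]$ holds, where $\mathcal{S}^c_k = \mathcal{S}^c \cap \{1,\ldots,k-1\}$. -/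
/-!
Given `X_1`, the variable `Y_k` carries no further information about the `U`'s, so
`H(U_k | U(Sᶜ_k), X_1, Y_k) = H(U_k | U(Sᶜ_k), X_1)`; pointwise this is the Markov factorisation
`p(w,x,y) p(x) = p(w,x) p(x,y)` after taking logarithms. Hence
`I(U_k; U(Sᶜ_k), X_1 | Y_k) = H(U_k | Y_k) - H(U_k | U(Sᶜ_k), X_1)`. By the chain rule the terms
`H(U_k | U(Sᶜ_k), X_1)` add up to `H(U(Sᶜ) | X_1)` and the terms `H(U_k | U(Sᶜ_k))` to `H(U(Sᶜ))`,
so both sides of the identity equal `H(U(Sᶜ)) - ∑_k H(U_k | Y_k)`.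
-/

open MeasureTheory Finset

namespace DDF

variable {Ω : Type*} [MeasurableSpace Ω]

/-- Probability that a random variable `X` takes the value `a`. -/
noncomputable def pr (μ : Measure Ω) {α : Type*} (X : Ω → α) (a : α) : ℝ :=
  (μ (X ⁻¹' {a})).toReal

/-- Shannon entropy (base 2) of a finitely-valued random variable. -/
noncomputable def ent (μ : Measure Ω) {α : Type*} [Fintype α] (X : Ω → α) : ℝ :=
  -∑ a : α, pr μ X a * Real.logb 2 (pr μ X a)

/-- Conditional entropy `H(X | Y)`. -/
noncomputable def condEnt (μ : Measure Ω) {α β : Type*} [Fintype α] [Fintype β]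
    (X : Ω → α) (Y : Ω → β) : ℝ :=
  ent μ (fun ω => (X ω, Y ω)) - ent μ Y

/-- Mutual information `I(X; Y)`. -/
noncomputable def mi (μ : Measure Ω) {α β : Type*} [Fintype α] [Fintype β]
    (X : Ω → α) (Y : Ω → β) : ℝ :=
  ent μ X + ent μ Y - ent μ (fun ω => (X ω, Y ω))

/-- Conditional mutual information `I(X; Y | Z)`. -/
noncomputable def cmi (μ : Measure Ω) {α β γ : Type*} [Fintype α] [Fintype β] [Fintype γ]
    (X : Ω → α) (Y : Ω → β) (Z : Ω → γ) : ℝ :=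
  condEnt μ X Z - condEnt μ X (fun ω => (Y ω, Z ω))

/-- The tuple `(X_k : k ∈ S)` as a single random variable. -/
def tup {Ω α : Type*} (X : ℕ → Ω → α) (S : Finset ℕ) (ω : Ω) : {k // k ∈ S} → α :=
  fun k => X k.1 ω

end DDF

open Function

namespace DDF

variable {Ω δ δ' ε ζ : Type*} [MeasurableSpace Ω] {μ : Measure Ω}

section Probability

lemma pr_nonneg (Z : Ω → δ) (d : δ) : 0 ≤ pr μ Z d :=
  ENNReal.toReal_nonneg

lemma pr_le_pr_comp [IsFiniteMeasure μ] (Z : Ω → δ) (g : δ → δ') (d : δ) :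
    pr μ Z d ≤ pr μ (fun ω => g (Z ω)) (g d) :=
  ENNReal.toReal_mono (measure_ne_top _ _) (measure_mono fun _ (h : _ = d) => congrArg g h)

lemma pr_comp_of_injective (Z : Ω → δ) {f : δ → δ'} (hf : Injective f) (d : δ) :
    pr μ (fun ω => f (Z ω)) (f d) = pr μ Z d := by
  simp only [pr, Set.preimage, Set.mem_singleton_iff, hf.eq_iff]

lemma pr_comp_eq_zero_of_notMem_range (Z : Ω → δ) (f : δ → δ') {d' : δ'}
    (h : d' ∉ Set.range f) : pr μ (fun ω => f (Z ω)) d' = 0 := by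
  have : (fun ω => f (Z ω)) ⁻¹' {d'} = ∅ :=
    Set.eq_empty_of_forall_notMem fun ω hω => h ⟨Z ω, hω⟩
  rw [pr, this, measure_empty, ENNReal.toReal_zero]

lemma measurableSet_preimage_of_fibers [Finite δ] {Z : Ω → δ}
    (hZ : ∀ d, MeasurableSet (Z ⁻¹' {d})) (s : Set δ) : MeasurableSet (Z ⁻¹' s) := by
  rw [← Set.biUnion_preimage_singleton]
  exact .biUnion (Set.toFinite s).countable fun d _ => hZ d

lemma measurableSet_prodMk_preimage_singleton {Z : Ω → δ} {V : Ω → ε}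
    (hZ : ∀ d, MeasurableSet (Z ⁻¹' {d})) (hV : ∀ e, MeasurableSet (V ⁻¹' {e})) (p : δ × ε) :
    MeasurableSet ((fun ω => (Z ω, V ω)) ⁻¹' {p}) := by
  have : (fun ω => (Z ω, V ω)) ⁻¹' {p} = Z ⁻¹' {p.1} ∩ V ⁻¹' {p.2} := by
    ext ω; simp [Prod.ext_iff]
  exact this ▸ (hZ _).inter (hV _)

variable [IsFiniteMeasure μ]

lemma pr_eq_sum_of_preimage_eq {Z : Ω → δ} (hZ : ∀ d, MeasurableSet (Z ⁻¹' {d}))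
    (s : Finset δ) {V : Ω → δ'} {v : δ'} (h : V ⁻¹' {v} = Z ⁻¹' s) :
    pr μ V v = ∑ d ∈ s, pr μ Z d := by
  rw [pr, h, ← sum_measure_preimage_singleton s fun d _ => hZ d,
    ENNReal.toReal_sum fun d _ => measure_ne_top μ _]
  rfl

lemma pr_comp_eq_sum [Fintype δ] [DecidableEq δ'] {Z : Ω → δ}
    (hZ : ∀ d, MeasurableSet (Z ⁻¹' {d})) (g : δ → δ') (d' : δ') :
    pr μ (fun ω => g (Z ω)) d' = ∑ d with g d = d', pr μ Z d :=
  pr_eq_sum_of_preimage_eq hZ _ (by ext ω; simp)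

lemma pr_map_fst_eq_sum [Fintype δ] [DecidableEq δ'] {Z : Ω → δ} {V : Ω → ε}
    (hZV : ∀ p, MeasurableSet ((fun ω => (Z ω, V ω)) ⁻¹' {p})) (g : δ → δ') (w : δ') (e : ε) :
    pr μ (fun ω => (g (Z ω), V ω)) (w, e)
      = ∑ u with g u = w, pr μ (fun ω => (Z ω, V ω)) (u, e) := by
  rw [pr_eq_sum_of_preimage_eq hZV (({u | g u = w} : Finset δ) ×ˢ {e}), sum_product]
  · simp only [sum_singleton]
  · ext ω; simp [Prod.ext_iff, eq_comm]

lemma sum_pr_comp_mul [Fintype δ] [Fintype δ'] {Z : Ω → δ}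
    (hZ : ∀ d, MeasurableSet (Z ⁻¹' {d})) (g : δ → δ') (F : δ' → ℝ) :
    ∑ d', pr μ (fun ω => g (Z ω)) d' * F d' = ∑ d, pr μ Z d * F (g d) := by
  classical
  rw [← sum_fiberwise univ g]
  refine sum_congr rfl fun d' _ => ?_
  rw [pr_comp_eq_sum hZ g, sum_mul]
  exact sum_congr rfl fun d hd => by rw [(mem_filter.1 hd).2]

end Probability

section Entropy

variable [Fintype δ] [Fintype δ'] [Fintype ε] [Fintype ζ]

lemma ent_comp_of_injective (Z : Ω → δ) {f : δ → δ'} (hf : Injective f) :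
    ent μ (fun ω => f (Z ω)) = ent μ Z := by
  refine congrArg Neg.neg (Fintype.sum_of_injective f hf _ _ (fun d' hd' => ?_) fun d => ?_).symm
  · rw [pr_comp_eq_zero_of_notMem_range Z f hd', zero_mul]
  · rw [pr_comp_of_injective Z hf]

lemma ent_prod_comm (A : Ω → δ) (B : Ω → ε) :
    ent μ (fun ω => (A ω, B ω)) = ent μ (fun ω => (B ω, A ω)) :=
  (ent_comp_of_injective _ Prod.swap_injective).symm

lemma ent_prod_assoc (A : Ω → δ) (B : Ω → ε) (C : Ω → ζ) :
    ent μ (fun ω => ((A ω, B ω), C ω)) = ent μ (fun ω => (A ω, B ω, C ω)) :=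
  ent_comp_of_injective (fun ω => (A ω, B ω, C ω)) (f := fun p => ((p.1, p.2.1), p.2.2))
    (LeftInverse.injective (g := fun q => (q.1.1, q.1.2, q.2)) fun _ => rfl)

lemma ent_const [IsProbabilityMeasure μ] (c : δ) : ent μ (fun _ => c) = 0 := by
  have hpr : ∀ d, pr μ (fun _ : Ω => c) d = 0 ∨ pr μ (fun _ : Ω => c) d = 1 := by
    intro d
    by_cases h : c = d <;> simp [pr, h]
  refine neg_eq_zero.2 (sum_eq_zero fun d _ => ?_)
  rcases hpr d with h | h <;> simp [h]

lemma ent_comp_eq_sum [IsFiniteMeasure μ] {Z : Ω → δ} (hZ : ∀ d, MeasurableSet (Z ⁻¹' {d}))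
    (g : δ → δ') :
    ent μ (fun ω => g (Z ω))
      = -∑ d, pr μ Z d * Real.logb 2 (pr μ (fun ω => g (Z ω)) (g d)) :=
  congrArg Neg.neg (sum_pr_comp_mul hZ g fun d' => Real.logb 2 (pr μ (fun ω => g (Z ω)) d'))

lemma condEnt_comp_left_of_injective (A : Ω → δ) (B : Ω → ε) {f : δ → δ'} (hf : Injective f) :
    condEnt μ (fun ω => f (A ω)) B = condEnt μ A B :=
  congrArg (· - ent μ B) (ent_comp_of_injective (fun ω => (A ω, B ω)) (hf.prodMap injective_id))

lemma condEnt_comp_right_of_injective (A : Ω → δ) (B : Ω → ε) {f : ε → δ'} (hf : Injective f) :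
    condEnt μ A (fun ω => f (B ω)) = condEnt μ A B := by
  rw [condEnt, condEnt, ent_comp_of_injective B hf]
  exact congrArg (· - ent μ B)
    (ent_comp_of_injective (fun ω => (A ω, B ω)) (injective_id.prodMap hf))

lemma condEnt_const_right [IsProbabilityMeasure μ] (A : Ω → δ) (c : ε) :
    condEnt μ A (fun _ => c) = ent μ A := by
  rw [condEnt, ent_const, sub_zero]
  exact ent_comp_of_injective A (f := fun a => (a, c)) fun _ _ h => congrArg Prod.fst h

lemma condEnt_of_subsingleton [Subsingleton δ] (A : Ω → δ) (B : Ω → ε) : condEnt μ A B = 0 :=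
  sub_eq_zero.2 (ent_comp_of_injective (fun ω => (A ω, B ω)) Prod.snd_injective).symm

lemma condEnt_prod_eq_add (A : Ω → δ) (B : Ω → ε) (Z : Ω → ζ) :
    condEnt μ (fun ω => (A ω, B ω)) Z = condEnt μ A (fun ω => (B ω, Z ω)) + condEnt μ B Z := by
  simp only [condEnt]
  rw [ent_prod_assoc]
  ring

lemma mi_comm (A : Ω → δ) (B : Ω → ε) : mi μ A B = mi μ B A := by
  simp only [mi]
  rw [ent_prod_comm]
  ring

lemma mi_eq_ent_sub_condEnt (A : Ω → δ) (B : Ω → ε) : mi μ A B = ent μ A - condEnt μ A B := by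
  simp only [mi, condEnt]
  ring

end Entropy

section Markov

variable {α γ : Type*}

def IsMarkovChain (μ : Measure Ω) (W : Ω → δ) (X : Ω → α) (Y : Ω → γ) : Prop :=
  ∀ w x y, pr μ (fun ω => (W ω, X ω, Y ω)) (w, x, y) * pr μ X x
    = pr μ (fun ω => (W ω, X ω)) (w, x) * pr μ (fun ω => (X ω, Y ω)) (x, y)

variable [IsFiniteMeasure μ] {W : Ω → δ} {X : Ω → α} {Y : Ω → γ}

namespace IsMarkovChain

lemma comp [Fintype δ] (h : IsMarkovChain μ W X Y) (hW : ∀ d, MeasurableSet (W ⁻¹' {d}))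
    (hX : ∀ a, MeasurableSet (X ⁻¹' {a})) (hY : ∀ c, MeasurableSet (Y ⁻¹' {c})) (g : δ → δ') :
    IsMarkovChain μ (fun ω => g (W ω)) X Y := by
  classical
  intro w x y
  rw [pr_map_fst_eq_sum (measurableSet_prodMk_preimage_singleton hW
      (measurableSet_prodMk_preimage_singleton hX hY)) g w (x, y),
    pr_map_fst_eq_sum (measurableSet_prodMk_preimage_singleton hW hX) g w x, sum_mul, sum_mul]
  exact sum_congr rfl fun u _ => h u x y

-- Multiplied by `p(w, x, y)` so that it also holds where the logarithms are junk values.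
lemma mul_logb_eq (h : IsMarkovChain μ W X Y) (w : δ) (x : α) (y : γ) :
    pr μ (fun ω => (W ω, X ω, Y ω)) (w, x, y)
        * (Real.logb 2 (pr μ (fun ω => (W ω, X ω, Y ω)) (w, x, y)) + Real.logb 2 (pr μ X x))
      = pr μ (fun ω => (W ω, X ω, Y ω)) (w, x, y)
        * (Real.logb 2 (pr μ (fun ω => (W ω, X ω)) (w, x))
          + Real.logb 2 (pr μ (fun ω => (X ω, Y ω)) (x, y))) := by
  rcases (pr_nonneg (μ := μ) (fun ω => (W ω, X ω, Y ω)) (w, x, y)).eq_or_lt with h0 | hpos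
  · rw [← h0, zero_mul, zero_mul]
  have hX : 0 < pr μ X x := hpos.trans_le (pr_le_pr_comp _ (fun j => j.2.1) (w, x, y))
  have hWXY := mul_ne_zero_iff.1 ((h w x y).symm ▸ (mul_pos hpos hX).ne')
  rw [← Real.logb_mul hpos.ne' hX.ne', ← Real.logb_mul hWXY.1 hWXY.2, h w x y]

lemma ent_add_ent [Fintype δ] [Fintype α] [Fintype γ]
    (h : IsMarkovChain μ W X Y) (hW : ∀ d, MeasurableSet (W ⁻¹' {d}))
    (hX : ∀ a, MeasurableSet (X ⁻¹' {a})) (hY : ∀ c, MeasurableSet (Y ⁻¹' {c})) :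
    ent μ (fun ω => (W ω, X ω, Y ω)) + ent μ X
      = ent μ (fun ω => (W ω, X ω)) + ent μ (fun ω => (X ω, Y ω)) := by
  have hJ := measurableSet_prodMk_preimage_singleton hW
    (measurableSet_prodMk_preimage_singleton hX hY)
  rw [ent_comp_eq_sum hJ (fun j => j.2.1), ent_comp_eq_sum hJ (fun j => (j.1, j.2.1)),
    ent_comp_eq_sum hJ (fun j => j.2), ent]
  simp only [← neg_add, ← sum_add_distrib, ← mul_add]
  exact congrArg _ (sum_congr rfl fun ⟨w, x, y⟩ _ => h.mul_logb_eq w x y)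

lemma condEnt_prod_right_eq {δ₁ δ₂ : Type*} [Fintype δ] [Fintype δ₁] [Fintype δ₂]
    [Fintype α] [Fintype γ] (h : IsMarkovChain μ W X Y) (hW : ∀ d, MeasurableSet (W ⁻¹' {d}))
    (hX : ∀ a, MeasurableSet (X ⁻¹' {a})) (hY : ∀ c, MeasurableSet (Y ⁻¹' {c}))
    (f : δ → δ₁) (g : δ → δ₂) :
    condEnt μ (fun ω => f (W ω)) (fun ω => ((g (W ω), X ω), Y ω))
      = condEnt μ (fun ω => f (W ω)) (fun ω => (g (W ω), X ω)) := by
  have hfg := (h.comp hW hX hY fun w => (f w, g w)).ent_add_ent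
    (fun d => measurableSet_preimage_of_fibers hW ((fun w => (f w, g w)) ⁻¹' {d})) hX hY
  have hg := (h.comp hW hX hY g).ent_add_ent
    (fun d => measurableSet_preimage_of_fibers hW (g ⁻¹' {d})) hX hY
  have hassoc : ent μ (fun ω => (f (W ω), (g (W ω), X ω), Y ω))
      = ent μ (fun ω => ((f (W ω), g (W ω)), X ω, Y ω)) :=
    ent_comp_of_injective (fun ω => ((f (W ω), g (W ω)), X ω, Y ω))
      (f := fun p => (p.1.1, (p.1.2, p.2.1), p.2.2))
      (LeftInverse.injective (g := fun q => ((q.1, q.2.1.1), q.2.1.2, q.2.2)) fun _ => rfl)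
  simp only [condEnt]
  rw [hassoc, ent_prod_assoc (fun ω => g (W ω)) X Y,
    ← ent_prod_assoc (fun ω => f (W ω)) (fun ω => g (W ω)) X]
  linarith

end IsMarkovChain

end Markov

section Tuple

variable {β : Type*} {U : ℕ → Ω → β}

lemma measurableSet_tup_preimage_singleton (hU : ∀ k b, MeasurableSet (U k ⁻¹' {b}))
    (S : Finset ℕ) (v : {k // k ∈ S} → β) : MeasurableSet (tup U S ⁻¹' {v}) := by
  have : tup U S ⁻¹' {v} = ⋂ j : {k // k ∈ S}, U j.1 ⁻¹' {v j} := by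
    ext ω
    simp [tup, funext_iff]
  exact this ▸ .iInter fun j => hU j.1 (v j)

lemma injective_split_insert (a : ℕ) (s : Finset ℕ) :
    Injective fun v : {k // k ∈ insert a s} → β =>
      (v ⟨a, mem_insert_self a s⟩, fun j : {k // k ∈ s} => v ⟨j, mem_insert_of_mem j.2⟩) := by
  intro v v' h
  simp only [Prod.mk.injEq, funext_iff, Subtype.forall] at h
  funext ⟨j, hj⟩
  rcases mem_insert.1 hj with rfl | hj
  exacts [h.1, h.2 j hj]

variable [Fintype β] {ζ : Type*} [Fintype ζ]

lemma condEnt_tup_eq_sum (U : ℕ → Ω → β) (Z : Ω → ζ) (S : Finset ℕ) :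
    condEnt μ (tup U S) Z
      = ∑ k ∈ S, condEnt μ (U k) (fun ω => (tup U (S.filter (· < k)) ω, Z ω)) := by
  induction S using Finset.induction_on_max with
  | empty => rw [sum_empty]; exact condEnt_of_subsingleton _ _
  | insert a s ha ih =>
    have hfilter_a : (insert a s).filter (· < a) = s := by
      rw [filter_insert, if_neg (lt_irrefl a), filter_true_of_mem ha]
    have hfilter : ∀ k ∈ s, (insert a s).filter (· < k) = s.filter (· < k) := fun k hk => by
      rw [filter_insert, if_neg (ha k hk).asymm]
    calc condEnt μ (tup U (insert a s)) Z
        = condEnt μ (fun ω => (U a ω, tup U s ω)) Z :=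
          (condEnt_comp_left_of_injective _ Z (injective_split_insert a s)).symm
      _ = condEnt μ (U a) (fun ω => (tup U s ω, Z ω)) + condEnt μ (tup U s) Z :=
          condEnt_prod_eq_add _ _ _
      _ = _ := by
          rw [sum_insert fun has => lt_irrefl a (ha a has), hfilter_a, ih]
          exact congrArg _ (sum_congr rfl fun k hk => by rw [hfilter k hk])

lemma ent_tup_eq_sum [IsProbabilityMeasure μ] (U : ℕ → Ω → β) (S : Finset ℕ) :
    ent μ (tup U S) = ∑ k ∈ S, condEnt μ (U k) (tup U (S.filter (· < k))) := by
  rw [← condEnt_const_right (tup U S) (), condEnt_tup_eq_sum]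
  exact sum_congr rfl fun k _ =>
    condEnt_comp_right_of_injective (U k) (tup U (S.filter (· < k))) (f := fun v => (v, ()))
      fun _ _ h => congrArg Prod.fst h

end Tuple

end DDF

open DDF in
/-- Marton-form identity (Appendix A): for `U_2^N → X_1 → Y_k` Markov chains,
`I(X_1; U(Sᶜ)) - ∑_{k∈Sᶜ} I(U_k; U(Sᶜ_k), X_1 | Y_k) = ∑_{k∈Sᶜ} [I(U_k; Y_k) - I(U_k; U(Sᶜ_k))]`. -/
theorem stmt0 {Ω α β γ : Type*} [MeasurableSpace Ω]
    [MeasurableSpace α] [MeasurableSingletonClass α] [Fintype α]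
    [MeasurableSpace β] [MeasurableSingletonClass β] [Fintype β]
    [MeasurableSpace γ] [MeasurableSingletonClass γ] [Fintype γ]
    (μ : Measure Ω) [IsProbabilityMeasure μ] (N : ℕ)
    (X1 : Ω → α) (U : ℕ → Ω → β) (Y : ℕ → Ω → γ)
    (hX1 : Measurable X1) (hU : ∀ k, Measurable (U k)) (hY : ∀ k, Measurable (Y k))
    -- Markov chain `(U_2, …, U_N) → X_1 → Y_k` for every `k ∈ [2:N]`:
    (hmarkov : ∀ k ∈ Finset.Icc 2 N, ∀ (u : {j // j ∈ Finset.Icc 2 N} → β) (x : α) (y : γ),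
      pr μ (fun ω => (tup U (Finset.Icc 2 N) ω, X1 ω, Y k ω)) (u, x, y) * pr μ X1 x
        = pr μ (fun ω => (tup U (Finset.Icc 2 N) ω, X1 ω)) (u, x)
            * pr μ (fun ω => (X1 ω, Y k ω)) (x, y))
    (Sc : Finset ℕ) (hSc : Sc ⊆ Finset.Icc 2 N) :
    mi μ X1 (tup U Sc)
        - ∑ k ∈ Sc, cmi μ (U k) (fun ω => (tup U (Sc.filter (· < k)) ω, X1 ω)) (Y k)
      = ∑ k ∈ Sc, (mi μ (U k) (Y k) - mi μ (U k) (tup U (Sc.filter (· < k)))) := by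
  have hcmi : ∀ k ∈ Sc, cmi μ (U k) (fun ω => (tup U (Sc.filter (· < k)) ω, X1 ω)) (Y k)
      = condEnt μ (U k) (Y k) - condEnt μ (U k) (fun ω => (tup U (Sc.filter (· < k)) ω, X1 ω)) := by
    intro k hk
    have hchain : IsMarkovChain μ (tup U (Icc 2 N)) X1 (Y k) := hmarkov k (hSc hk)
    exact congrArg (condEnt μ (U k) (Y k) - ·) <| hchain.condEnt_prod_right_eq
      (measurableSet_tup_preimage_singleton (fun j b => hU j (measurableSet_singleton b)) _)
      (fun x => hX1 (measurableSet_singleton x)) (fun y => hY k (measurableSet_singleton y))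
      (fun v => v ⟨k, hSc hk⟩)
      (fun v (j : {i // i ∈ Sc.filter (· < k)}) => v ⟨j, hSc (mem_filter.1 j.2).1⟩)
  rw [mi_comm, mi_eq_ent_sub_condEnt, condEnt_tup_eq_sum U X1, ent_tup_eq_sum U Sc,
    sum_congr rfl hcmi]
  simp only [mi_eq_ent_sub_condEnt, sum_sub_distrib]
  ring
end

section
/- Let $K$ be an $N \times N$ positive semidefinite real matrix with diagonal entries $K_{jj} \le P$ for some $P > 0$, let $\mathcal{S} \subseteq \{1,\ldots,N\}$, and let $K(\mathcal{S})$ denote the principal submatrix of $K$ indexed by $\mathcal{S}$ and $G(\mathcal{S})$ any real matrix with $|\mathcal{S}|$ columns. Then $\tfrac{1}{2}\log\det(I + G(\mathcal{S}) K(\mathcal{S}) G(\mathcal{S})^T) \le \tfrac{1}{2}\log\det(I + P\, G(\mathcal{S}) G(\mathcal{S})^T) + \tfrac{|\mathcal{S}|}{2}$. -/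
/-!
With `R = √K` and `T = √(1 + P GᵀG)`, Sylvester's identity `det (1 + AB) = det (1 + BA)` and
the monotonicity of `det` on the Loewner order give
`det (1 + GKGᵀ) = det (1 + R GᵀG R) ≤ det (1 + P⁻¹ R T² R) = det (1 + P⁻¹ TKT)`
`  ≤ det (T² + P⁻¹ TKT) = det (1 + P GGᵀ) · det (1 + P⁻¹ K)`.
The eigenvalues of `1 + P⁻¹ K` are nonnegative with sum `tr (1 + P⁻¹ K) ≤ 2|S|`, and
`t ≤ 2 exp (t / 2 - 1)` turns this into `det (1 + P⁻¹ K) ≤ 2 ^ |S|`.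
-/

open Matrix
open scoped MatrixOrder

lemma Real.prod_le_two_pow_of_sum_le {ι : Type*} {s : Finset ι} {y : ι → ℝ}
    (hy : ∀ i ∈ s, 0 ≤ y i) (hsum : ∑ i ∈ s, y i ≤ 2 * s.card) :
    ∏ i ∈ s, y i ≤ 2 ^ s.card := by
  have htangent (t : ℝ) : t ≤ 2 * Real.exp (t / 2 - 1) := by
    linarith [Real.add_one_le_exp (t / 2 - 1)]
  calc ∏ i ∈ s, y i ≤ ∏ i ∈ s, 2 * Real.exp (y i / 2 - 1) :=
        Finset.prod_le_prod hy fun i _ => htangent (y i)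
    _ = 2 ^ s.card * Real.exp (∑ i ∈ s, (y i / 2 - 1)) := by
        rw [Finset.prod_mul_distrib, Finset.prod_const, Real.exp_sum]
    _ ≤ 2 ^ s.card * Real.exp 0 := by
        gcongr
        rw [Finset.sum_sub_distrib, ← Finset.sum_div]
        simp only [Finset.sum_const, nsmul_eq_mul, mul_one]
        linarith
    _ = 2 ^ s.card := by rw [Real.exp_zero, mul_one]

namespace Matrix

variable {n ι : Type*} [Fintype n] [DecidableEq n]

lemma PosSemidef.exists_transpose_eq_mul_self_eq {A : Matrix n n ℝ} (hA : A.PosSemidef) :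
    ∃ S : Matrix n n ℝ, Sᵀ = S ∧ S * S = A := by
  refine ⟨CFC.sqrt A, ?_, CFC.sqrt_mul_sqrt_self A hA.nonneg⟩
  rw [← conjTranspose_eq_transpose_of_trivial]
  exact (CFC.sqrt_nonneg A).isSelfAdjoint

omit [DecidableEq n] in
lemma PosSemidef.mul_mul_of_transpose_eq {A S : Matrix n n ℝ} (hA : A.PosSemidef)
    (hS : Sᵀ = S) :
    (S * A * S).PosSemidef := by
  simpa [conjTranspose_eq_transpose_of_trivial, hS] using hA.conjTranspose_mul_mul_same S

lemma det_le_one_of_nonneg_of_le_one {C : Matrix n n ℝ} (hC : 0 ≤ C) (hC1 : C ≤ 1) :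
    C.det ≤ 1 := by
  have hspec : ∀ x ∈ spectrum ℝ C, x ≤ 1 :=
    (le_algebraMap_iff_spectrum_le hC.posSemidef.isHermitian).mp (by simpa using hC1)
  rw [hC.posSemidef.isHermitian.det_eq_prod_eigenvalues]
  exact Finset.prod_le_one (fun i _ => hC.posSemidef.eigenvalues_nonneg i)
    fun i _ => hspec _ (hC.posSemidef.isHermitian.eigenvalues_mem_spectrum_real i)

lemma det_le_det_of_le {A B : Matrix n n ℝ} (hA : 0 ≤ A) (hAB : A ≤ B) (hB : B.PosDef) :
    A.det ≤ B.det := by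
  obtain ⟨S, hS, hSS⟩ := hB.posSemidef.exists_transpose_eq_mul_self_eq
  have hdetS : IsUnit S.det := by
    refine isUnit_iff_ne_zero.mpr fun h => hB.det_pos.ne' ?_
    rw [← hSS, det_mul, h, zero_mul]
  have hSinv : S⁻¹ᵀ = S⁻¹ := by rw [transpose_nonsing_inv, hS]
  have hB_conj : S⁻¹ * B * S⁻¹ = 1 := by
    rw [← hSS, Matrix.mul_assoc, Matrix.mul_assoc, mul_nonsing_inv _ hdetS, Matrix.mul_one,
      nonsing_inv_mul _ hdetS]
  have hC0 : 0 ≤ S⁻¹ * A * S⁻¹ := (hA.posSemidef.mul_mul_of_transpose_eq hSinv).nonneg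
  have hC1 : S⁻¹ * A * S⁻¹ ≤ 1 := by
    rw [le_iff, ← hB_conj, ← Matrix.sub_mul, ← Matrix.mul_sub]
    exact (le_iff.mp hAB).mul_mul_of_transpose_eq hSinv
  have hdet : (S⁻¹ * A * S⁻¹).det * B.det = A.det := by
    rw [← hSS, det_mul, det_mul, det_mul]
    linear_combination (S⁻¹.det * S.det + 1) * A.det * (det_nonsing_inv_mul_det S hdetS)
  calc A.det = (S⁻¹ * A * S⁻¹).det * B.det := hdet.symm
    _ ≤ 1 * B.det :=
        mul_le_mul_of_nonneg_right (det_le_one_of_nonneg_of_le_one hC0 hC1) hB.det_pos.le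
    _ = B.det := one_mul _

lemma det_le_two_pow_of_trace_le {A : Matrix n n ℝ} (hA : A.PosSemidef)
    (htr : A.trace ≤ 2 * Fintype.card n) : A.det ≤ 2 ^ Fintype.card n := by
  rw [hA.isHermitian.det_eq_prod_eigenvalues]
  rw [hA.isHermitian.trace_eq_sum_eigenvalues] at htr
  exact_mod_cast Real.prod_le_two_pow_of_sum_le (fun i _ => hA.eigenvalues_nonneg i)
    (by simpa using htr)

lemma det_one_add_inv_smul_le_two_pow {P : ℝ} (hP : 0 < P) {K : Matrix n n ℝ}
    (hK : K.PosSemidef) (hdiag : ∀ j, K j j ≤ P) :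
    (1 + P⁻¹ • K).det ≤ 2 ^ Fintype.card n := by
  refine det_le_two_pow_of_trace_le (PosSemidef.one.add (hK.smul (inv_nonneg.mpr hP.le))) ?_
  have htrK : K.trace ≤ Fintype.card n * P := by
    simpa [trace] using Finset.sum_le_sum fun j (_ : j ∈ Finset.univ) => hdiag j
  rw [trace_add, trace_smul, trace_one, smul_eq_mul]
  have : P⁻¹ * K.trace ≤ Fintype.card n := by
    rw [inv_mul_le_iff₀ hP]; linarith
  linarith

variable [Fintype ι] [DecidableEq ι]

lemma det_one_add_mul_mul_transpose_le {P : ℝ} (hP : 0 < P) {K : Matrix n n ℝ}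
    (hK : K.PosSemidef) (G : Matrix ι n ℝ) :
    (1 + G * K * Gᵀ).det ≤ (1 + P • (G * Gᵀ)).det * (1 + P⁻¹ • K).det := by
  have hGG : (Gᵀ * G).PosSemidef := by
    simpa [conjTranspose_eq_transpose_of_trivial] using posSemidef_conjTranspose_mul_self G
  set N : Matrix n n ℝ := 1 + P • (Gᵀ * G)
  have hN : N.PosDef := PosDef.one.add_posSemidef (hGG.smul hP.le)
  obtain ⟨R, hR, hRR⟩ := hK.exists_transpose_eq_mul_self_eq
  obtain ⟨T, hT, hTT⟩ := hN.posSemidef.exists_transpose_eq_mul_self_eq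
  have hRGGR := hGG.mul_mul_of_transpose_eq hR
  have hPK : (P⁻¹ • K).PosSemidef := hK.smul (inv_nonneg.mpr hP.le)
  have hTKT := hPK.mul_mul_of_transpose_eq hT
  have hRNR : P⁻¹ • (R * N * R) = R * (Gᵀ * G) * R + P⁻¹ • K := by
    simp only [N, Matrix.mul_add, Matrix.add_mul, Matrix.mul_one, Matrix.mul_smul,
      Matrix.smul_mul, smul_add, smul_smul, inv_mul_cancel₀ hP.ne', one_smul, hRR]
    abel
  calc (1 + G * K * Gᵀ).det = (1 + R * (Gᵀ * G) * R).det := by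
        rw [← hRR, show G * (R * R) * Gᵀ = (G * R) * (R * Gᵀ) by simp only [Matrix.mul_assoc],
          det_one_add_mul_comm]
        simp only [Matrix.mul_assoc]
    _ ≤ (1 + P⁻¹ • (R * N * R)).det := by
        rw [hRNR]
        refine det_le_det_of_le (PosSemidef.one.add hRGGR).nonneg ?_
          (PosDef.one.add_posSemidef (hRGGR.add hPK))
        rwa [le_iff, ← add_assoc, add_sub_cancel_left]
    _ = (1 + T * (P⁻¹ • K) * T).det := by
        rw [← hTT, ← hRR, show P⁻¹ • (R * (T * T) * R) = (P⁻¹ • (R * T)) * (T * R) by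
          simp only [Matrix.mul_assoc, Matrix.smul_mul], det_one_add_mul_comm]
        simp only [Matrix.mul_assoc, Matrix.mul_smul, Matrix.smul_mul]
    _ ≤ (N + T * (P⁻¹ • K) * T).det := by
        refine det_le_det_of_le (PosSemidef.one.add hTKT).nonneg ?_ (hN.add_posSemidef hTKT)
        rw [le_iff, add_sub_add_right_eq_sub, add_sub_cancel_left]
        exact hGG.smul hP.le
    _ = (1 + P • (G * Gᵀ)).det * (1 + P⁻¹ • K).det := by
        have hfactor : N + T * (P⁻¹ • K) * T = T * (1 + P⁻¹ • K) * T := by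
          rw [Matrix.mul_add, Matrix.add_mul, Matrix.mul_one, hTT]
        rw [hfactor, det_mul, det_mul, mul_right_comm, ← det_mul, hTT]
        simp only [N]
        rw [← Matrix.smul_mul, det_one_add_mul_comm, Matrix.mul_smul]

lemma det_one_add_mul_mul_transpose_le_mul_two_pow {P : ℝ} (hP : 0 < P) {K : Matrix n n ℝ}
    (hK : K.PosSemidef) (hdiag : ∀ j, K j j ≤ P) (G : Matrix ι n ℝ) :
    (1 + G * K * Gᵀ).det ≤ (1 + P • (G * Gᵀ)).det * 2 ^ Fintype.card n := by
  have hGG : (G * Gᵀ).PosSemidef := by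
    simpa [conjTranspose_eq_transpose_of_trivial] using posSemidef_self_mul_conjTranspose G
  exact (det_one_add_mul_mul_transpose_le hP hK G).trans <| mul_le_mul_of_nonneg_left
    (det_one_add_inv_smul_le_two_pow hP hK hdiag)
    (PosDef.one.add_posSemidef (hGG.smul hP.le)).det_pos.le

end Matrix

/-- for an `N×N` PSD matrix `K` with diagonal entries `≤ P`, a subset `S`, and any
real matrix `G` with columns indexed by `S`,
`½ log₂ det(I + G K(S) Gᵀ) ≤ ½ log₂ det(I + P G Gᵀ) + |S|/2`. -/
theorem stmt2 (N : ℕ) (P : ℝ) (hP : 0 < P)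
    (K : Matrix (Fin N) (Fin N) ℝ) (hK : K.PosSemidef) (hdiag : ∀ j, K j j ≤ P)
    (S : Finset (Fin N)) {ι : Type*} [Fintype ι] [DecidableEq ι]
    (G : Matrix ι {j : Fin N // j ∈ S} ℝ) :
    (1 / 2) * Real.logb 2
        ((1 + G * K.submatrix (fun j : {j : Fin N // j ∈ S} => (j : Fin N))
            (fun j : {j : Fin N // j ∈ S} => (j : Fin N)) * G.transpose).det)
      ≤ (1 / 2) * Real.logb 2 ((1 + P • (G * G.transpose)).det) + (S.card : ℝ) / 2 := by
  set KS := K.submatrix (fun j : {j : Fin N // j ∈ S} => (j : Fin N))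
    (fun j : {j : Fin N // j ∈ S} => (j : Fin N))
  have hKS : KS.PosSemidef := hK.submatrix _
  have hbound := det_one_add_mul_mul_transpose_le_mul_two_pow hP hKS (fun j => hdiag j) G
  rw [Fintype.card_coe] at hbound
  have hpos : 0 < (1 + G * KS * Gᵀ).det := by
    refine (PosDef.one.add_posSemidef ?_).det_pos
    simpa [conjTranspose_eq_transpose_of_trivial] using hKS.mul_mul_conjTranspose_same G
  have hne : (1 + P • (G * Gᵀ)).det ≠ 0 := by
    intro h
    rw [h, zero_mul] at hbound
    linarith
  have hlog := Real.logb_le_logb_of_le (b := 2) (by norm_num) hpos hbound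
  rw [Real.logb_mul hne (by positivity), Real.logb_pow, Real.logb_self_eq_one (by norm_num),
    mul_one] at hlog
  linarith
end

section
/- For any real matrix $G$ and positive semidefinite matrix $K$ of compatible dimensions and any $P>0$ with $K$ having all diagonal entries at most $P$, the bound $\log\det(I + G K G^T) \le \log\det(I + P\, G G^T) + \log\det(I + \tfrac{1}{P}K)$ holds. -/
/-!
Sylvester's identity `det (1 + A * B) = det (1 + B * A)` turns `det (1 + G K Gᵀ)` into
`det (1 + K' X)` with `K' = P⁻¹ • K` and `X = P • (Gᵀ G)`, both positive semidefinite, and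
likewise `det (1 + P • (G Gᵀ)) = det (1 + X)`. The determinant is monotone on positive
definite matrices, since `det (A + Bᴴ B) = det A * det (1 + B A⁻¹ Bᴴ)` and
`det (1 + S) ≥ 1` for `S ⪰ 0`. With `R = √(1 + X)`, monotonicity gives
`det (1 + K' X) ≤ det (1 + K' R²) = det (1 + R K' R) ≤ det (1 + X + R K' R)`,
and the last term is `det (R (1 + K') R) = det (1 + X) * det (1 + K')`.
-/

open Matrix
open scoped MatrixOrder Pointwise

namespace Matrix

variable {n : Type*} [Fintype n] [DecidableEq n]

theorem PosSemidef.one_le_det_one_add {S : Matrix n n ℝ} (hS : S.PosSemidef) :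
    1 ≤ (1 + S).det := by
  have hH : (1 + S).IsHermitian := isHermitian_one.add hS.isHermitian
  rw [hH.det_eq_prod_eigenvalues]
  refine Finset.one_le_prod fun i _ => ?_
  have hi : hH.eigenvalues i ∈ ({(1 : ℝ)} + spectrum ℝ S) := by
    rw [spectrum.singleton_add_eq, map_one]
    exact hH.eigenvalues_mem_spectrum_real i
  rw [Set.singleton_add] at hi
  obtain ⟨μ, hμ, hμi⟩ := hi
  have hμ0 : 0 ≤ μ := (posSemidef_iff_isHermitian_and_spectrum_nonneg.mp hS).2 hμ
  simpa [← hμi] using hμ0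

theorem PosSemidef.det_one_add_pos {S : Matrix n n ℝ} (hS : S.PosSemidef) : 0 < (1 + S).det :=
  zero_lt_one.trans_le hS.one_le_det_one_add

theorem PosDef.det_le_det_add {A S : Matrix n n ℝ} (hA : A.PosDef) (hS : S.PosSemidef) :
    A.det ≤ (A + S).det := by
  obtain ⟨B, rfl⟩ := CStarAlgebra.nonneg_iff_eq_star_mul_self.mp hS.nonneg
  have hAB : A + star B * B = A * (1 + A⁻¹ * star B * B) := by
    rw [Matrix.mul_add, Matrix.mul_one, Matrix.mul_assoc A⁻¹,
      mul_nonsing_inv_cancel_left _ _ ((isUnit_iff_isUnit_det A).mp hA.isUnit)]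
  have hBAB : (B * A⁻¹ * star B).PosSemidef := hA.inv.posSemidef.mul_mul_conjTranspose_same B
  rw [hAB, det_mul, det_one_add_mul_comm, ← Matrix.mul_assoc]
  exact le_mul_of_one_le_right hA.det_pos.le hBAB.one_le_det_one_add

theorem PosSemidef.det_one_add_mul_le_det_one_add_mul_add {K X Y : Matrix n n ℝ}
    (hK : K.PosSemidef) (hX : X.PosSemidef) (hY : Y.PosSemidef) :
    (1 + K * X).det ≤ (1 + K * (X + Y)).det := by
  obtain ⟨C, rfl⟩ := CStarAlgebra.nonneg_iff_eq_star_mul_self.mp hK.nonneg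
  have hCXC : (1 + C * X * star C).PosDef :=
    PosDef.one.add_posSemidef (hX.mul_mul_conjTranspose_same C)
  calc (1 + star C * C * X).det = (1 + C * X * star C).det := by
        rw [Matrix.mul_assoc, det_one_add_mul_comm, Matrix.mul_assoc]
    _ ≤ (1 + C * X * star C + C * Y * star C).det :=
        hCXC.det_le_det_add (hY.mul_mul_conjTranspose_same C)
    _ = (1 + star C * C * (X + Y)).det := by
        rw [add_assoc, ← Matrix.add_mul, ← Matrix.mul_add, det_one_add_mul_comm,
          ← Matrix.mul_assoc]

theorem PosSemidef.det_one_add_mul_le {K X : Matrix n n ℝ} (hK : K.PosSemidef)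
    (hX : X.PosSemidef) : (1 + K * X).det ≤ (1 + X).det * (1 + K).det := by
  have hX1 : 0 ≤ 1 + X := (PosSemidef.one.add hX).nonneg
  set R := CFC.sqrt (1 + X)
  have hRR : R * R = 1 + X := CFC.sqrt_mul_sqrt_self _ hX1
  have hR : Rᴴ = R := (CFC.sqrt_nonneg (1 + X)).isSelfAdjoint
  have hRKR : (R * K * R).PosSemidef := by
    simpa only [hR] using hK.conjTranspose_mul_mul_same R
  calc (1 + K * X).det ≤ (1 + K * (X + 1)).det :=
        hK.det_one_add_mul_le_det_one_add_mul_add hX .one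
    _ = (1 + R * K * R).det := by
        rw [add_comm X, ← hRR, ← Matrix.mul_assoc, det_one_add_mul_comm, Matrix.mul_assoc]
    _ ≤ (1 + R * K * R + X).det := (PosDef.one.add_posSemidef hRKR).det_le_det_add hX
    _ = (R * (1 + K) * R).det := by
        rw [Matrix.mul_add, Matrix.add_mul, Matrix.mul_one, hRR, add_right_comm]
    _ = (1 + X).det * (1 + K).det := by
        rw [← hRR, det_mul, det_mul, det_mul]
        ring

end Matrix

theorem stmt3_general (n m : ℕ) (P : ℝ) (hP : 0 < P)
    (G : Matrix (Fin n) (Fin m) ℝ) (K : Matrix (Fin m) (Fin m) ℝ)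
    (hK : K.PosSemidef) :
    Real.log ((1 + G * K * G.transpose).det)
      ≤ Real.log ((1 + P • (G * G.transpose)).det) + Real.log ((1 + P⁻¹ • K).det) := by
  have hGG : (P • (G * Gᵀ)).PosSemidef := (posSemidef_self_mul_conjTranspose G).smul hP.le
  have hPK : (P⁻¹ • K).PosSemidef := hK.smul (inv_nonneg.2 hP.le)
  have hdet : (1 + G * K * Gᵀ).det ≤ (1 + P • (G * Gᵀ)).det * (1 + P⁻¹ • K).det :=
    calc (1 + G * K * Gᵀ).det = (1 + P⁻¹ • K * (P • (Gᵀ * G))).det := by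
          rw [Matrix.smul_mul, Matrix.mul_smul, smul_smul, inv_mul_cancel₀ hP.ne', one_smul,
            Matrix.mul_assoc G, det_one_add_mul_comm, Matrix.mul_assoc]
      _ ≤ (1 + P • (Gᵀ * G)).det * (1 + P⁻¹ • K).det :=
          hPK.det_one_add_mul_le ((posSemidef_conjTranspose_mul_self G).smul hP.le)
      _ = (1 + P • (G * Gᵀ)).det * (1 + P⁻¹ • K).det := by
          rw [← Matrix.mul_smul, det_one_add_mul_comm, Matrix.smul_mul]
  have hGKG : (G * K * Gᵀ).PosSemidef := hK.mul_mul_conjTranspose_same G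
  rw [← Real.log_mul hGG.det_one_add_pos.ne' hPK.det_one_add_pos.ne']
  exact Real.log_le_log hGKG.det_one_add_pos hdet

/-- `log det(I + G K Gᵀ) ≤ log det(I + P G Gᵀ) + log det(I + P⁻¹ K)` for
`K` PSD with diagonal entries at most `P > 0`. -/
theorem stmt3 (n m : ℕ) (P : ℝ) (hP : 0 < P)
    (G : Matrix (Fin n) (Fin m) ℝ) (K : Matrix (Fin m) (Fin m) ℝ)
    (hK : K.PosSemidef) (hdiag : ∀ j, K j j ≤ P) :
    Real.log ((1 + G * K * G.transpose).det)
      ≤ Real.log ((1 + P • (G * G.transpose)).det) + Real.log ((1 + P⁻¹ • K).det) :=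
  stmt3_general n m P hP G K hK
end

section
/- Under the symmetry assumptions of the previous covering setup, and the additional condition $p_3([2:N]) = p_1^2$, the variance satisfies $\mathrm{Var}(\mathcal{A}) \le T L\, p_1 + \sum_{\emptyset \ne \hat{\mathcal{S}} \subseteq [2:N]} T L \cdot L(\hat{\mathcal{S}})\, p_2(\hat{\mathcal{S}}) + \sum_{\hat{\mathcal{S}} \subsetneq [2:N]} T^2 L \cdot L(\hat{\mathcal{S}})\, p_3(\hat{\mathcal{S}})$, where $\mathcal{A} = \sum_{t,\mathbf{l}} E(t,\mathbf{l})$. -/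
/-!
Expand `Var 𝒜 = 𝔼 𝒜² - (𝔼 𝒜)²` as a sum of `μ (E(t,l) ∩ E(t',l'))` over pairs of indices. By
symmetry each term depends only on whether `t = t'` and on the set `S` of coordinates where `l`
and `l'` differ, and for fixed `l` at most `L(S)` indices `l'` differ from `l` exactly on `S`.
For `t ≠ t'` and `l`, `l'` differing in every coordinate the term is `p₁²`, and these
`T (T - 1) L²` terms add up to less than `(𝔼 𝒜)² = T² L² p₁²`.
-/

open MeasureTheory ProbabilityTheory Finset

theorem sum_sum_le_of_diag_of_offDiag {ι : Type*} [DecidableEq ι] (s : Finset ι)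
    {F : ι → ι → ℝ} {a b : ℝ} (hdiag : ∀ i ∈ s, F i i ≤ a)
    (hoff : ∀ i ∈ s, ∀ j ∈ s, i ≠ j → F i j ≤ b) :
    ∑ i ∈ s, ∑ j ∈ s, F i j ≤ #s * a + #s * (#s - 1) * b := by
  have hrow : ∀ i ∈ s, ∑ j ∈ s, F i j ≤ a + (#s - 1) * b := by
    intro i hi
    rw [← add_sum_erase s _ hi]
    gcongr
    · exact hdiag i hi
    · calc ∑ j ∈ s.erase i, F i j ≤ ∑ _j ∈ s.erase i, b :=
            sum_le_sum fun j hj => hoff i hi j (mem_of_mem_erase hj) (ne_of_mem_erase hj).symm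
        _ = (#s - 1) * b := by
            rw [sum_const, nsmul_eq_mul, card_erase_of_mem hi,
              Nat.cast_pred (card_pos.mpr ⟨i, hi⟩)]
  calc ∑ i ∈ s, ∑ j ∈ s, F i j ≤ ∑ _i ∈ s, (a + (#s - 1) * b) := sum_le_sum hrow
    _ = #s * a + #s * (#s - 1) * b := by rw [sum_const, nsmul_eq_mul]; ring

namespace Covering

section DiffSet

variable {κ β : Type*} [Fintype κ] [DecidableEq β]

def diffSet (l l' : κ → β) : Finset κ := {k | l k ≠ l' k}

theorem diffSet_eq_empty_iff {l l' : κ → β} : diffSet l l' = ∅ ↔ l = l' := by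
  simp [diffSet, Finset.filter_eq_empty_iff, funext_iff]

variable [DecidableEq κ] {t : κ → Finset β} {Λ : Finset (κ → β)}

/-- Outside `S` every member of the fibre agrees with `l`, so the fibre sits in a box with
sides `t k` on `S` and `{l k}` off `S`. -/
theorem card_filter_diffSet_eq_le (hΛ : Λ ⊆ Fintype.piFinset t) (l : κ → β) (S : Finset κ) :
    #{l' ∈ Λ | diffSet l l' = S} ≤ ∏ k ∈ S, #(t k) := by
  have hbox : {l' ∈ Λ | diffSet l l' = S}
      ⊆ Fintype.piFinset fun k => if k ∈ S then t k else {l k} := by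
    intro l' hl'
    obtain ⟨hl'Λ, rfl⟩ := Finset.mem_filter.mp hl'
    rw [Fintype.mem_piFinset]
    intro k
    split_ifs with hk
    · exact Fintype.mem_piFinset.mp (hΛ hl'Λ) k
    · simpa [diffSet, eq_comm] using hk
  calc #{l' ∈ Λ | diffSet l l' = S}
      ≤ #(Fintype.piFinset fun k => if k ∈ S then t k else {l k}) := card_le_card hbox
    _ = ∏ k ∈ S, #(t k) := by
      simp only [Fintype.card_piFinset, apply_ite Finset.card, card_singleton,
        prod_ite_mem, univ_inter]

theorem sum_diffSet_le {U : Finset (Finset κ)} {q : Finset κ → ℝ}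
    (hΛ : Λ ⊆ Fintype.piFinset t) (l : κ → β) (hU : ∀ l' ∈ Λ, diffSet l l' ∈ U)
    (hq : ∀ S ∈ U, 0 ≤ q S) :
    ∑ l' ∈ Λ, q (diffSet l l') ≤ ∑ S ∈ U, (∏ k ∈ S, (#(t k) : ℝ)) * q S := by
  rw [← sum_fiberwise_of_maps_to' hU]
  refine sum_le_sum fun S hS => ?_
  rw [sum_const, nsmul_eq_mul]
  gcongr
  · exact hq S hS
  · exact_mod_cast card_filter_diffSet_eq_le hΛ l S

theorem sum_sum_le_of_diag_of_diffSet (hΛ : Λ ⊆ Fintype.piFinset t)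
    {F : (κ → β) → (κ → β) → ℝ} {a : ℝ} {q : Finset κ → ℝ} (hq : ∀ S, 0 ≤ q S)
    (hdiag : ∀ l ∈ Λ, F l l ≤ a)
    (hoff : ∀ l ∈ Λ, ∀ l' ∈ Λ, l ≠ l' → F l l' ≤ q (diffSet l l')) :
    ∑ l ∈ Λ, ∑ l' ∈ Λ, F l l'
      ≤ #Λ * (a + ∑ S ∈ univ.filter (· ≠ ∅), (∏ k ∈ S, (#(t k) : ℝ)) * q S) := by
  have hrow : ∀ l ∈ Λ, ∑ l' ∈ Λ, F l l'
      ≤ a + ∑ S ∈ univ.filter (· ≠ ∅), (∏ k ∈ S, (#(t k) : ℝ)) * q S := by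
    intro l hl
    rw [← add_sum_erase Λ _ hl]
    gcongr
    · exact hdiag l hl
    · calc ∑ l' ∈ Λ.erase l, F l l' ≤ ∑ l' ∈ Λ.erase l, q (diffSet l l') :=
            sum_le_sum fun l' hl' =>
              hoff l hl l' (mem_of_mem_erase hl') (ne_of_mem_erase hl').symm
        _ ≤ _ := by
          refine sum_diffSet_le ((erase_subset l Λ).trans hΛ) l (fun l' hl' => ?_)
            fun S _ => hq S
          simpa [diffSet_eq_empty_iff, eq_comm] using ne_of_mem_erase hl'
  calc ∑ l ∈ Λ, ∑ l' ∈ Λ, F l l' ≤ ∑ _l ∈ Λ, _ := sum_le_sum hrow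
    _ = _ := by rw [sum_const, nsmul_eq_mul]

theorem sum_sum_le_of_diffSet (hΛ : Λ ⊆ Fintype.piFinset t)
    {F : (κ → β) → (κ → β) → ℝ} {q : Finset κ → ℝ} (hq : ∀ S, 0 ≤ q S)
    (hF : ∀ l ∈ Λ, ∀ l' ∈ Λ, F l l' ≤ q (diffSet l l')) :
    ∑ l ∈ Λ, ∑ l' ∈ Λ, F l l' ≤ #Λ * ∑ S, (∏ k ∈ S, (#(t k) : ℝ)) * q S := by
  have hrow : ∀ l ∈ Λ, ∑ l' ∈ Λ, F l l' ≤ ∑ S, (∏ k ∈ S, (#(t k) : ℝ)) * q S :=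
    fun l hl => (sum_le_sum (hF l hl)).trans
      (sum_diffSet_le hΛ l (fun _ _ => mem_univ _) fun S _ => hq S)
  calc ∑ l ∈ Λ, ∑ l' ∈ Λ, F l l' ≤ ∑ _l ∈ Λ, _ := sum_le_sum hrow
    _ = _ := by rw [sum_const, nsmul_eq_mul]

theorem sum_sum_sum_sum_le_of_diffSet {ι : Type*} [DecidableEq ι] (s : Finset ι)
    (hΛ : Λ ⊆ Fintype.piFinset t) {F : ι → (κ → β) → ι → (κ → β) → ℝ} {a : ℝ}
    {q₂ q₃ : Finset κ → ℝ} (hq₂ : ∀ S, 0 ≤ q₂ S) (hq₃ : ∀ S, 0 ≤ q₃ S)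
    (hdiag : ∀ i ∈ s, ∀ l ∈ Λ, F i l i l ≤ a)
    (hsame : ∀ i ∈ s, ∀ l ∈ Λ, ∀ l' ∈ Λ, l ≠ l' → F i l i l' ≤ q₂ (diffSet l l'))
    (hcross : ∀ i ∈ s, ∀ j ∈ s, i ≠ j → ∀ l ∈ Λ, ∀ l' ∈ Λ, F i l j l' ≤ q₃ (diffSet l l')) :
    ∑ i ∈ s, ∑ l ∈ Λ, ∑ j ∈ s, ∑ l' ∈ Λ, F i l j l'
      ≤ #s * (#Λ * (a + ∑ S ∈ univ.filter (· ≠ ∅), (∏ k ∈ S, (#(t k) : ℝ)) * q₂ S))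
        + #s * (#s - 1) * (#Λ * ∑ S, (∏ k ∈ S, (#(t k) : ℝ)) * q₃ S) := by
  rw [sum_congr rfl fun i _ => sum_comm]
  exact sum_sum_le_of_diag_of_offDiag s
    (fun i hi => sum_sum_le_of_diag_of_diffSet hΛ hq₂ (hdiag i hi) (hsame i hi))
    fun i hi j hj hij => sum_sum_le_of_diffSet hΛ hq₃ (hcross i hi j hj hij)

end DiffSet

end Covering

theorem variance_sum_indicator_one {Ω ι : Type*} [MeasurableSpace Ω] (μ : Measure Ω)
    [IsProbabilityMeasure μ] (s : Finset ι) {E : ι → Set Ω}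
    (hE : ∀ i ∈ s, MeasurableSet (E i)) :
    variance (fun ω => ∑ i ∈ s, (E i).indicator 1 ω) μ
      = ∑ i ∈ s, ∑ j ∈ s, μ.real (E i ∩ E j) - (∑ i ∈ s, μ.real (E i)) ^ 2 := by
  have hmemLp : MemLp (fun ω => ∑ i ∈ s, (E i).indicator (1 : Ω → ℝ) ω) 2 μ :=
    memLp_finsetSum s fun i hi =>
      memLp_indicator_const 2 (hE i hi) 1 (Or.inr (measure_ne_top μ _))
  have hsq : (fun ω => ∑ i ∈ s, (E i).indicator (1 : Ω → ℝ) ω) ^ 2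
      = fun ω => ∑ i ∈ s, ∑ j ∈ s, (E i ∩ E j).indicator 1 ω := by
    ext ω
    simp only [Pi.pow_apply, sq, sum_mul_sum, Set.inter_indicator_one, Pi.mul_apply]
  have hint : ∀ i ∈ s, ∀ j ∈ s, Integrable ((E i ∩ E j).indicator (1 : Ω → ℝ)) μ :=
    fun i hi j hj => (integrable_const 1).indicator ((hE i hi).inter (hE j hj))
  have hsecond : ∫ ω, ∑ i ∈ s, ∑ j ∈ s, (E i ∩ E j).indicator (1 : Ω → ℝ) ω ∂μ
      = ∑ i ∈ s, ∑ j ∈ s, μ.real (E i ∩ E j) := by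
    rw [integral_finsetSum _ fun i hi => integrable_finsetSum _ (hint i hi)]
    refine sum_congr rfl fun i hi => ?_
    rw [integral_finsetSum _ (hint i hi)]
    exact sum_congr rfl fun j hj => integral_indicator_one ((hE i hi).inter (hE j hj))
  have hfirst : ∫ ω, ∑ i ∈ s, (E i).indicator (1 : Ω → ℝ) ω ∂μ = ∑ i ∈ s, μ.real (E i) := by
    rw [integral_finsetSum _ fun i hi => (integrable_const 1).indicator (hE i hi)]
    exact sum_congr rfl fun i hi => integral_indicator_one (hE i hi)
  rw [variance_eq_sub hmemLp, hsq, hsecond, hfirst]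

open Covering

theorem stmt9_general {Ω κ : Type*} [MeasurableSpace Ω] [Fintype κ] [DecidableEq κ]
    (μ : Measure Ω) [IsProbabilityMeasure μ]
    (T : ℕ) (L : κ → ℕ)
    (E : ℕ → (κ → ℕ) → Set Ω) (hE : ∀ t l, MeasurableSet (E t l)) :
    let one : κ → ℕ := fun _ => 1
    let two : Finset κ → κ → ℕ := fun Sh k => if k ∈ Sh then 2 else 1
    let Lset : Finset (κ → ℕ) := Fintype.piFinset fun k => Finset.Icc 1 (L k)
    let p1 : ℝ := (μ (E 1 one)).toReal
    let p2 : Finset κ → ℝ := fun Sh => (μ (E 1 one ∩ E 1 (two Sh))).toReal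
    let p3 : Finset κ → ℝ := fun Sh => (μ (E 1 one ∩ E 2 (two Sh))).toReal
    let A : Ω → ℝ := fun ω => ∑ t ∈ Finset.Icc 1 T, ∑ l ∈ Lset,
      Set.indicator (E t l) (fun _ => (1 : ℝ)) ω
    -- symmetry assumptions
    (∀ t ∈ Finset.Icc 1 T, ∀ l ∈ Lset, μ (E t l) = μ (E 1 one)) →
    (∀ t ∈ Finset.Icc 1 T, ∀ l ∈ Lset, ∀ l' ∈ Lset, l ≠ l' →
      μ (E t l ∩ E t l')
        = μ (E 1 one ∩ E 1 (two (Finset.univ.filter fun k => l k ≠ l' k)))) →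
    (∀ t ∈ Finset.Icc 1 T, ∀ t' ∈ Finset.Icc 1 T, t ≠ t' → ∀ l ∈ Lset, ∀ l' ∈ Lset,
      μ (E t l ∩ E t' l')
        = μ (E 1 one ∩ E 2 (two (Finset.univ.filter fun k => l k ≠ l' k)))) →
    -- independence of fully distinct codewords
    p3 Finset.univ = p1 ^ 2 →
    variance A μ
      ≤ (T : ℝ) * (∏ k, (L k : ℝ)) * p1
        + ∑ Sh ∈ (Finset.univ : Finset (Finset κ)).filter (· ≠ ∅),
            (T : ℝ) * (∏ k, (L k : ℝ)) * (∏ k ∈ Sh, (L k : ℝ)) * p2 Sh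
        + ∑ Sh ∈ (Finset.univ : Finset (Finset κ)).filter (· ≠ Finset.univ),
            (T : ℝ) ^ 2 * (∏ k, (L k : ℝ)) * (∏ k ∈ Sh, (L k : ℝ)) * p3 Sh := by
  intro one two Lset p1 p2 p3 A h1 h2 h3 hp3
  have hA : A = fun ω => ∑ p ∈ Icc 1 T ×ˢ Lset, (E p.1 p.2).indicator 1 ω := by
    ext ω
    rw [sum_product]
    rfl
  rw [hA, variance_sum_indicator_one μ _ fun p _ => hE p.1 p.2]
  simp only [sum_product]
  have hcardL : (#Lset : ℝ) = ∏ k, (L k : ℝ) := by simp [Lset]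
  set LL : ℝ := ∏ k, (L k : ℝ)
  have hmean : ∑ t ∈ Icc 1 T, ∑ l ∈ Lset, μ.real (E t l) = T * LL * p1 := by
    rw [sum_congr rfl fun t ht => sum_congr rfl fun l hl =>
      show μ.real (E t l) = p1 by rw [measureReal_def, h1 t ht l hl]]
    simp only [sum_const, nsmul_eq_mul, hcardL, Nat.card_Icc, add_tsub_cancel_right]
    ring
  have hsecond := sum_sum_sum_sum_le_of_diffSet (Icc 1 T) (Λ := Lset) Subset.rfl
    (F := fun t l t' l' => μ.real (E t l ∩ E t' l')) (q₂ := p2) (q₃ := p3)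
    (fun _ => ENNReal.toReal_nonneg) (fun _ => ENNReal.toReal_nonneg)
    (fun t ht l hl => by rw [Set.inter_self, measureReal_def, h1 t ht l hl])
    (fun t ht l hl l' hl' hne => by rw [measureReal_def, h2 t ht l hl l' hl' hne]; rfl)
    (fun t ht t' ht' hne l hl l' hl' => by
      rw [measureReal_def, h3 t ht t' ht' hne l hl l' hl']; rfl)
  rw [← add_sum_erase _ _ (mem_univ univ), hp3, ← filter_ne'] at hsecond
  simp only [hcardL, Nat.card_Icc, add_tsub_cancel_right] at hsecond
  rw [hmean]
  simp only [mul_assoc, ← mul_sum]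
  set C : ℝ := ∑ S ∈ univ.filter (· ≠ univ), (∏ k ∈ S, (L k : ℝ)) * p3 S
  have hC0 : 0 ≤ C := sum_nonneg fun S _ =>
    mul_nonneg (prod_nonneg fun _ _ => Nat.cast_nonneg _) ENNReal.toReal_nonneg
  have hLL : 0 ≤ LL := prod_nonneg fun _ _ => Nat.cast_nonneg _
  linarith [mul_nonneg (mul_nonneg T.cast_nonneg hLL)
    (add_nonneg (mul_nonneg hLL (sq_nonneg p1)) hC0)]

/-- variance bound for the covering lemma. Under the same symmetry assumptions as
the second-moment bound, together with `p₃([2:N]) = p₁²` (independence of fully distinct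
codewords), `Var(A) ≤ T·L·p₁ + ∑_{Sh≠∅} T·L·L(Sh)·p₂(Sh) + ∑_{Sh⊊univ} T²·L·L(Sh)·p₃(Sh)`. -/
theorem stmt9 {Ω κ : Type*} [MeasurableSpace Ω] [Fintype κ] [DecidableEq κ]
    (μ : Measure Ω) [IsProbabilityMeasure μ]
    (T : ℕ) (L : κ → ℕ) (hT : 2 ≤ T) (hL : ∀ k, 2 ≤ L k)
    (E : ℕ → (κ → ℕ) → Set Ω) (hE : ∀ t l, MeasurableSet (E t l)) :
    let one : κ → ℕ := fun _ => 1
    let two : Finset κ → κ → ℕ := fun Sh k => if k ∈ Sh then 2 else 1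
    let Lset : Finset (κ → ℕ) := Fintype.piFinset fun k => Finset.Icc 1 (L k)
    let p1 : ℝ := (μ (E 1 one)).toReal
    let p2 : Finset κ → ℝ := fun Sh => (μ (E 1 one ∩ E 1 (two Sh))).toReal
    let p3 : Finset κ → ℝ := fun Sh => (μ (E 1 one ∩ E 2 (two Sh))).toReal
    let A : Ω → ℝ := fun ω => ∑ t ∈ Finset.Icc 1 T, ∑ l ∈ Lset,
      Set.indicator (E t l) (fun _ => (1 : ℝ)) ω
    -- symmetry assumptions
    (∀ t ∈ Finset.Icc 1 T, ∀ l ∈ Lset, μ (E t l) = μ (E 1 one)) →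
    (∀ t ∈ Finset.Icc 1 T, ∀ l ∈ Lset, ∀ l' ∈ Lset, l ≠ l' →
      μ (E t l ∩ E t l')
        = μ (E 1 one ∩ E 1 (two (Finset.univ.filter fun k => l k ≠ l' k)))) →
    (∀ t ∈ Finset.Icc 1 T, ∀ t' ∈ Finset.Icc 1 T, t ≠ t' → ∀ l ∈ Lset, ∀ l' ∈ Lset,
      μ (E t l ∩ E t' l')
        = μ (E 1 one ∩ E 2 (two (Finset.univ.filter fun k => l k ≠ l' k)))) →
    -- independence of fully distinct codewords
    p3 Finset.univ = p1 ^ 2 →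
    variance A μ
      ≤ (T : ℝ) * (∏ k, (L k : ℝ)) * p1
        + ∑ Sh ∈ (Finset.univ : Finset (Finset κ)).filter (· ≠ ∅),
            (T : ℝ) * (∏ k, (L k : ℝ)) * (∏ k ∈ Sh, (L k : ℝ)) * p2 Sh
        + ∑ Sh ∈ (Finset.univ : Finset (Finset κ)).filter (· ≠ Finset.univ),
            (T : ℝ) ^ 2 * (∏ k, (L k : ℝ)) * (∏ k ∈ Sh, (L k : ℝ)) * p3 Sh :=
  stmt9_general μ T L E hE
end

section
/- For finite discrete random variables and disjoint index sets, assume that for each $k\in\hat{\mathcal{S}}^c$ the Markov chains $U_k \to (X^N, U(\hat{\mathcal{S}}^c_k), X_k) \to Y_k$ and $Y_k \to X^N \to (U_2^N)$ hold, in the sense that the channel satisfies $p(y_k\mid x^N, u_2^N) = p(y_k\mid x^N)$. Then $\sum_{k\in\hat{\mathcal{S}}^c}[I(U_k; U(\hat{\mathcal{S}}^c_k), X(\hat{\mathcal{S}}^c)\mid X_k) - I(U_k; Y_k\mid X_k)] = \sum_{k\in\hat{\mathcal{S}}^c} I(U_k; U(\hat{\mathcal{S}}^c_k), X^N\mid X_k,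 Y_k) - \sum_{k\in\hat{\mathcal{S}}^c} I(U_k; X_1, X(\hat{\mathcal{S}})\mid X(\hat{\mathcal{S}}^c), U(\hat{\mathcal{S}}^c_k))$, and by the chain rule the last sum equals $I(X_1, X(\hat{\mathcal{S}}); U(\hat{\mathcal{S}}^c)\mid X(\hat{\mathcal{S}}^c))$, so that $\sum_{k\in\hat{\mathcal{S}}^c} [I(U_k; U(\hat{\mathcal{S}}^c_k), X(\hat{\mathcal{S}}^c)\mid X_k) - I(U_k; Y_k \mid X_k)] = \sum_{k\in\hat{\mathcal{S}}^c} I(U_k; U(\hat{\mathcal{S}}^c_k), X^N \mid X_k, Y_k) - I(X_1, X(\hat{\mathcal{S}}); U(\hat{\mathcal{S}}^c)\mid X(\hat{\mathcal{S}}^c))$. -/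
open MeasureTheory Finset

namespace DDF

variable {Ω : Type*} [MeasurableSpace Ω]

lemma pr_nonneg_s19 (μ : Measure Ω) {α : Type*} (X : Ω → α) (a : α) : 0 ≤ pr μ X a :=
  ENNReal.toReal_nonneg

lemma pr_eq_of_preimage_eq (μ : Measure Ω) {α β : Type*} (X : Ω → α) (Y : Ω → β) (a : α) (b : β)
    (h : X ⁻¹' {a} = Y ⁻¹' {b}) : pr μ X a = pr μ Y b := by
  simp [pr, h]

lemma pr_le (μ : Measure Ω) [IsFiniteMeasure μ] {α β : Type*} (X : Ω → α) (Y : Ω → β)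
    (a : α) (b : β) (h : X ⁻¹' {a} ⊆ Y ⁻¹' {b}) : pr μ X a ≤ pr μ Y b :=
  ENNReal.toReal_mono (measure_ne_top μ _) (measure_mono h)

lemma pr_comp_eq (μ : Measure Ω) {α β : Type*} (i : α → β) (hi : Function.Injective i)
    (f : Ω → α) (a : α) : pr μ (fun ω => i (f ω)) (i a) = pr μ f a := by
  apply pr_eq_of_preimage_eq
  ext ω; simp [hi.eq_iff]

lemma pr_comp_ne (μ : Measure Ω) {α β : Type*} (i : α → β) (f : Ω → α) (b : β)
    (hb : ∀ a, i a ≠ b) : pr μ (fun ω => i (f ω)) b = 0 := by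
  have h : (fun ω => i (f ω)) ⁻¹' {b} = ∅ := by ext ω; simp [hb]
  simp [pr, h]

lemma ent_comp_inj (μ : Measure Ω) {α β : Type*} [Fintype α] [Fintype β]
    (i : α → β) (hi : Function.Injective i) (f : Ω → α) :
    ent μ (fun ω => i (f ω)) = ent μ f := by
  classical
  unfold ent
  congr 1
  rw [← Finset.sum_subset (Finset.subset_univ (Finset.univ.image i))]
  · rw [Finset.sum_image (fun a _ a' _ h => hi h)]
    exact Finset.sum_congr rfl fun a _ => by rw [pr_comp_eq μ i hi]
  · intro b _ hb
    rw [pr_comp_ne μ i f b fun a hab => hb (Finset.mem_image.2 ⟨a, Finset.mem_univ a, hab⟩)]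
    simp

lemma pr_sum_fst (μ : Measure Ω) [IsFiniteMeasure μ] {α β : Type*} [Fintype α]
    [MeasurableSpace α] [MeasurableSingletonClass α]
    [MeasurableSpace β] [MeasurableSingletonClass β]
    (f : Ω → α) (g : Ω → β) (hf : Measurable f) (hg : Measurable g) (b : β) :
    ∑ a : α, pr μ (fun ω => (f ω, g ω)) (a, b) = pr μ g b := by
  unfold pr
  rw [← ENNReal.toReal_sum (fun a _ => measure_ne_top μ _)]
  congr 1
  have hset : g ⁻¹' {b} = ⋃ a ∈ (Finset.univ : Finset α), (fun ω => (f ω, g ω)) ⁻¹' {(a, b)} := by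
    ext ω; simp [Prod.ext_iff]
  rw [hset, measure_biUnion_finset]
  · intro a _ a' _ hne
    apply Set.disjoint_left.2
    intro ω h1 h2
    simp only [Set.mem_preimage, Set.mem_singleton_iff, Prod.ext_iff] at h1 h2
    exact hne (h1.1 ▸ h2.1 ▸ rfl)
  · exact fun a _ => (hf.prodMk hg) (measurableSet_singleton _)

lemma pr_sum_snd (μ : Measure Ω) [IsFiniteMeasure μ] {α β : Type*} [Fintype β]
    [MeasurableSpace α] [MeasurableSingletonClass α]
    [MeasurableSpace β] [MeasurableSingletonClass β]
    (f : Ω → α) (g : Ω → β) (hf : Measurable f) (hg : Measurable g) (a : α) :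
    ∑ b : β, pr μ (fun ω => (f ω, g ω)) (a, b) = pr μ f a := by
  unfold pr
  rw [← ENNReal.toReal_sum (fun b _ => measure_ne_top μ _)]
  congr 1
  have hset : f ⁻¹' {a} = ⋃ b ∈ (Finset.univ : Finset β), (fun ω => (f ω, g ω)) ⁻¹' {(a, b)} := by
    ext ω; simp [Prod.ext_iff]
  rw [hset, measure_biUnion_finset]
  · intro b _ b' _ hne
    apply Set.disjoint_left.2
    intro ω h1 h2
    simp only [Set.mem_preimage, Set.mem_singleton_iff, Prod.ext_iff] at h1 h2
    exact hne (h1.2 ▸ h2.2 ▸ rfl)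
  · exact fun b _ => (hf.prodMk hg) (measurableSet_singleton _)

lemma pr_map_left (μ : Measure Ω) [IsFiniteMeasure μ] {α α' β : Type*} [Fintype α]
    [MeasurableSpace α] [MeasurableSingletonClass α]
    [MeasurableSpace β] [MeasurableSingletonClass β] [DecidableEq α']
    (f : Ω → α) (g : Ω → β) (hf : Measurable f) (hg : Measurable g)
    (φ : α → α') (v : α') (w : β) :
    pr μ (fun ω => (φ (f ω), g ω)) (v, w)
      = ∑ a ∈ Finset.univ.filter (fun a => φ a = v),
          pr μ (fun ω => (f ω, g ω)) (a, w) := by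
  unfold pr
  rw [← ENNReal.toReal_sum (fun a _ => measure_ne_top μ _)]
  congr 1
  have hset : (fun ω => (φ (f ω), g ω)) ⁻¹' {(v, w)}
      = ⋃ a ∈ Finset.univ.filter (fun a => φ a = v), (fun ω => (f ω, g ω)) ⁻¹' {(a, w)} := by
    ext ω
    simp only [Set.mem_preimage, Set.mem_singleton_iff, Prod.ext_iff, Set.mem_iUnion,
      Finset.mem_filter, Finset.mem_univ, true_and]
    constructor
    · rintro ⟨h1, h2⟩; exact ⟨f ω, h1, rfl, h2⟩
    · rintro ⟨a, h1, h2, h3⟩; exact ⟨h2 ▸ h1, h3⟩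
  rw [hset, measure_biUnion_finset]
  · intro a _ a' _ hne
    apply Set.disjoint_left.2
    intro ω h1 h2
    simp only [Set.mem_preimage, Set.mem_singleton_iff, Prod.ext_iff] at h1 h2
    exact hne (h1.1 ▸ h2.1 ▸ rfl)
  · exact fun a _ => (hf.prodMk hg) (measurableSet_singleton _)

lemma telescope (S : Finset ℕ) (g : Finset ℕ → ℝ) :
    ∑ k ∈ S, (g (S.filter (· < k)) - g (insert k (S.filter (· < k)))) = g ∅ - g S := by
  classical
  induction S using Finset.induction_on_max with
  | empty => simp
  | insert b s hb ih =>
    have hbs : b ∉ s := fun h => lt_irrefl b (hb b h)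
    have hfilt : ∀ k ∈ s, (insert b s).filter (· < k) = s.filter (· < k) := by
      intro k hk
      rw [Finset.filter_insert, if_neg]
      exact fun h => absurd (hb k hk) (by omega)
    have hfb : (insert b s).filter (· < b) = s := by
      rw [Finset.filter_insert, if_neg (lt_irrefl b)]
      exact Finset.filter_true_of_mem hb
    rw [Finset.sum_insert hbs, hfb]
    rw [Finset.sum_congr rfl (fun k hk => by rw [hfilt k hk])]
    rw [ih]
    ring

lemma ent_markov (μ : Measure Ω) [IsFiniteMeasure μ]
    {A B C : Type*} [Fintype A] [Fintype B] [Fintype C]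
    [MeasurableSpace A] [MeasurableSingletonClass A]
    [MeasurableSpace B] [MeasurableSingletonClass B]
    [MeasurableSpace C] [MeasurableSingletonClass C]
    (f : Ω → A) (g : Ω → B) (h : Ω → C)
    (hf : Measurable f) (hg : Measurable g) (hh : Measurable h)
    (hfac : ∀ a b c, pr μ (fun ω => (f ω, (g ω, h ω))) (a, (b, c)) * pr μ g b
        = pr μ (fun ω => (f ω, g ω)) (a, b) * pr μ (fun ω => (g ω, h ω)) (b, c)) :
    ent μ (fun ω => (f ω, (g ω, h ω))) + ent μ g
      = ent μ (fun ω => (f ω, g ω)) + ent μ (fun ω => (g ω, h ω)) := by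
  classical
  set p : A → B → C → ℝ := fun a b c => pr μ (fun ω => (f ω, (g ω, h ω))) (a, (b, c)) with hp
  set r : A → B → ℝ := fun a b => pr μ (fun ω => (f ω, g ω)) (a, b) with hrdef
  set s : B → C → ℝ := fun b c => pr μ (fun ω => (g ω, h ω)) (b, c) with hsdef
  set q : B → ℝ := fun b => pr μ g b with hqdef
  have hr : ∀ a b, r a b = ∑ c, p a b c := by
    intro a b
    show pr μ (fun ω => (f ω, g ω)) (a, b) = _
    rw [← pr_sum_snd μ (fun ω => (f ω, g ω)) h (hf.prodMk hg) hh (a, b)]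
    refine Finset.sum_congr rfl fun c _ => ?_
    exact pr_eq_of_preimage_eq μ _ _ _ _ (by ext ω; simp [Prod.ext_iff]; tauto)
  have hs : ∀ b c, s b c = ∑ a, p a b c := by
    intro b c
    exact (pr_sum_fst μ f (fun ω => (g ω, h ω)) hf (hg.prodMk hh) (b, c)).symm
  have hq : ∀ b, q b = ∑ a, ∑ c, p a b c := by
    intro b
    show pr μ g b = _
    rw [← pr_sum_fst μ f g hf hg b]
    exact Finset.sum_congr rfl fun a _ => hr a b
  -- subset bounds
  have hple_q : ∀ a b c, p a b c ≤ q b := by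
    intro a b c
    exact pr_le μ _ _ _ _ (fun ω hω => by
      simp only [Set.mem_preimage, Set.mem_singleton_iff, Prod.ext_iff] at hω ⊢
      exact hω.2.1)
  have hple_r : ∀ a b c, p a b c ≤ r a b := by
    intro a b c
    exact pr_le μ _ _ _ _ (fun ω hω => by
      simp only [Set.mem_preimage, Set.mem_singleton_iff, Prod.ext_iff] at hω ⊢
      exact ⟨hω.1, hω.2.1⟩)
  have hple_s : ∀ a b c, p a b c ≤ s b c := by
    intro a b c
    exact pr_le μ _ _ _ _ (fun ω hω => by
      simp only [Set.mem_preimage, Set.mem_singleton_iff, Prod.ext_iff] at hω ⊢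
      exact hω.2)
  have e1 : ent μ (fun ω => (f ω, (g ω, h ω)))
      = -∑ a, ∑ b, ∑ c, p a b c * Real.logb 2 (p a b c) := by
    rw [ent, Fintype.sum_prod_type]
    congr 1
    exact Finset.sum_congr rfl fun a _ => Fintype.sum_prod_type _
  have e2 : ent μ (fun ω => (f ω, g ω))
      = -∑ a, ∑ b, ∑ c, p a b c * Real.logb 2 (r a b) := by
    rw [ent, Fintype.sum_prod_type]
    congr 1
    refine Finset.sum_congr rfl fun a _ => Finset.sum_congr rfl fun b _ => ?_
    rw [← Finset.sum_mul, ← hr]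
  have e3 : ent μ (fun ω => (g ω, h ω))
      = -∑ a, ∑ b, ∑ c, p a b c * Real.logb 2 (s b c) := by
    rw [ent, Fintype.sum_prod_type]
    have : ∑ b, ∑ c, pr μ (fun ω => (g ω, h ω)) (b, c) * Real.logb 2 (pr μ (fun ω => (g ω, h ω)) (b, c))
        = ∑ b, ∑ c, ∑ a, p a b c * Real.logb 2 (s b c) := by
      refine Finset.sum_congr rfl fun b _ => Finset.sum_congr rfl fun c _ => ?_
      rw [← Finset.sum_mul, ← hs]
    rw [this]
    congr 1
    calc ∑ b, ∑ c, ∑ a, p a b c * Real.logb 2 (s b c)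
        = ∑ b, ∑ a, ∑ c, p a b c * Real.logb 2 (s b c) :=
          Finset.sum_congr rfl fun b _ => Finset.sum_comm
      _ = ∑ a, ∑ b, ∑ c, p a b c * Real.logb 2 (s b c) := Finset.sum_comm
  have e4 : ent μ g = -∑ a, ∑ b, ∑ c, p a b c * Real.logb 2 (q b) := by
    rw [ent]
    have : ∑ b, pr μ g b * Real.logb 2 (pr μ g b)
        = ∑ b, ∑ a, ∑ c, p a b c * Real.logb 2 (q b) := by
      refine Finset.sum_congr rfl fun b _ => ?_
      simp only [← Finset.sum_mul]
      rw [← hq]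
    rw [this]
    congr 1
    exact Finset.sum_comm
  rw [e1, e2, e3, e4]
  rw [← sub_eq_zero]
  have : ∀ a b c, p a b c * Real.logb 2 (p a b c) + p a b c * Real.logb 2 (q b)
      - (p a b c * Real.logb 2 (r a b) + p a b c * Real.logb 2 (s b c)) = 0 := by
    intro a b c
    rcases eq_or_lt_of_le (pr_nonneg_s19 μ _ ((a, (b, c)) : A × B × C)) with hzero | hpos
    · rw [show p a b c = 0 from hzero.symm]; ring
    · have hq0 : 0 < q b := lt_of_lt_of_le hpos (hple_q a b c)
      have hr0 : 0 < r a b := lt_of_lt_of_le hpos (hple_r a b c)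
      have hs0 : 0 < s b c := lt_of_lt_of_le hpos (hple_s a b c)
      have key : p a b c * q b = r a b * s b c := hfac a b c
      have hlog : Real.logb 2 (p a b c) + Real.logb 2 (q b)
          = Real.logb 2 (r a b) + Real.logb 2 (s b c) := by
        rw [← Real.logb_mul hpos.ne' hq0.ne', ← Real.logb_mul hr0.ne' hs0.ne', key]
      linear_combination p a b c * hlog
  have hsum : ∑ a, ∑ b, ∑ c,
      (p a b c * Real.logb 2 (p a b c) + p a b c * Real.logb 2 (q b)
        - (p a b c * Real.logb 2 (r a b) + p a b c * Real.logb 2 (s b c))) = 0 :=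
    Finset.sum_eq_zero fun a _ => Finset.sum_eq_zero fun b _ => Finset.sum_eq_zero fun c _ =>
      this a b c
  simp only [Finset.sum_sub_distrib, Finset.sum_add_distrib] at hsum
  linarith [hsum]



lemma pr_tup_pair_eq (μ : Measure Ω) {β B : Type*} (U : ℕ → Ω → β)
    (T S : Finset ℕ) (hT : T ⊆ S) (g : Ω → B)
    (u : {j // j ∈ S} → β) (v : {j // j ∈ T} → β) (w : B)
    (h : (fun j : {j // j ∈ T} => u ⟨j.1, hT j.2⟩) = v) :
    pr μ (fun ω => (tup U S ω, (tup U T ω, g ω))) (u, (v, w))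
      = pr μ (fun ω => (tup U S ω, g ω)) (u, w) := by
  apply pr_eq_of_preimage_eq
  ext ω
  simp only [Set.mem_preimage, Set.mem_singleton_iff, Prod.ext_iff]
  constructor
  · rintro ⟨h1, _, h3⟩; exact ⟨h1, h3⟩
  · rintro ⟨h1, h3⟩
    refine ⟨h1, ?_, h3⟩
    rw [← h, ← h1]; rfl

lemma pr_tup_pair_ne (μ : Measure Ω) {β B : Type*} (U : ℕ → Ω → β)
    (T S : Finset ℕ) (hT : T ⊆ S) (g : Ω → B)
    (u : {j // j ∈ S} → β) (v : {j // j ∈ T} → β) (w : B)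
    (h : (fun j : {j // j ∈ T} => u ⟨j.1, hT j.2⟩) ≠ v) :
    pr μ (fun ω => (tup U S ω, (tup U T ω, g ω))) (u, (v, w)) = 0 := by
  have hempty : (fun ω => (tup U S ω, (tup U T ω, g ω))) ⁻¹' {(u, (v, w))} = ∅ := by
    ext ω
    simp only [Set.mem_preimage, Set.mem_singleton_iff, Prod.ext_iff,
      Set.mem_empty_iff_false, iff_false]
    rintro ⟨h1, h2, -⟩
    apply h
    rw [← h2, ← h1]; rfl
  simp [pr, hempty]

lemma ent_unique_pair_left (μ : Measure Ω) {τ δ : Type*} [Fintype τ] [Fintype δ] [Unique τ]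
    (B : Ω → τ) (W : Ω → δ) : ent μ (fun ω => (B ω, W ω)) = ent μ W := by
  have hi : Function.Injective (fun w : δ => ((default : τ), w)) :=
    fun w w' h => congrArg Prod.snd h
  rw [show (fun ω => (B ω, W ω)) = fun ω => ((default : τ), W ω) from
    funext fun ω => by rw [Subsingleton.elim (B ω) default]]
  exact ent_comp_inj μ _ hi W

lemma ent_unique_pair_mid (μ : Measure Ω) {τ δ₁ δ₂ : Type*} [Fintype τ] [Fintype δ₁]
    [Fintype δ₂] [Unique τ] (A : Ω → δ₁) (B : Ω → τ) (C : Ω → δ₂) :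
    ent μ (fun ω => (A ω, (B ω, C ω))) = ent μ (fun ω => (A ω, C ω)) := by
  have hi : Function.Injective (fun ac : δ₁ × δ₂ => (ac.1, ((default : τ), ac.2))) := by
    rintro ⟨a, c⟩ ⟨a', c'⟩ h
    simp only [Prod.mk.injEq] at h ⊢
    exact ⟨h.1, h.2.2⟩
  rw [show (fun ω => (A ω, (B ω, C ω))) = fun ω => (A ω, ((default : τ), C ω)) from
    funext fun ω => by rw [Subsingleton.elim (B ω) default]]
  exact ent_comp_inj μ _ hi (fun ω => (A ω, C ω))


end DDF

open DDF in
/-- mutual-information rearrangement (Appendix C) under the channel structure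
`p(y_k | x^N, u_2^N) = p(y_k | x^N)`:
`∑_{k∈Shc}[I(U_k; U(Shc_k), X(Shc) | X_k) - I(U_k; Y_k | X_k)]
  = ∑_{k∈Shc} I(U_k; U(Shc_k), X^N | X_k, Y_k) - I(X_1, X(Sh); U(Shc) | X(Shc))`. -/
theorem stmt19 {Ω α β γ : Type*} [MeasurableSpace Ω]
    [MeasurableSpace α] [MeasurableSingletonClass α] [Fintype α]
    [MeasurableSpace β] [MeasurableSingletonClass β] [Fintype β]
    [MeasurableSpace γ] [MeasurableSingletonClass γ] [Fintype γ]
    (μ : Measure Ω) [IsProbabilityMeasure μ] (N : ℕ)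
    (X : ℕ → Ω → α) (U : ℕ → Ω → β) (Y : ℕ → Ω → γ)
    (hX : ∀ k, Measurable (X k)) (hU : ∀ k, Measurable (U k)) (hY : ∀ k, Measurable (Y k))
    -- each `Y_k` is conditionally independent of `(U_2,…,U_N)` given `X^N = (X_1,…,X_N)`
    (hmarkov : ∀ k ∈ Finset.Icc 2 N,
      ∀ (u : {j // j ∈ Finset.Icc 2 N} → β) (x : {j // j ∈ Finset.Icc 1 N} → α) (y : γ),
      pr μ (fun ω => (tup U (Finset.Icc 2 N) ω, tup X (Finset.Icc 1 N) ω, Y k ω)) (u, x, y)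
          * pr μ (tup X (Finset.Icc 1 N)) x
        = pr μ (fun ω => (tup U (Finset.Icc 2 N) ω, tup X (Finset.Icc 1 N) ω)) (u, x)
            * pr μ (fun ω => (tup X (Finset.Icc 1 N) ω, Y k ω)) (x, y))
    (Sh : Finset ℕ) (hSh : Sh ⊆ Finset.Icc 2 N) :
    let Shc : Finset ℕ := Finset.Icc 2 N \ Sh
    ∑ k ∈ Shc,
        (cmi μ (U k) (fun ω => (tup U (Shc.filter (· < k)) ω, tup X Shc ω)) (X k)
          - cmi μ (U k) (Y k) (X k))
      = ∑ k ∈ Shc,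
          cmi μ (U k)
            (fun ω => (tup U (Shc.filter (· < k)) ω, tup X (Finset.Icc 1 N) ω))
            (fun ω => (X k ω, Y k ω))
        - cmi μ (fun ω => (X 1 ω, tup X Sh ω)) (tup U Shc) (tup X Shc) := by
  classical
  intro Shc
  have mX : ∀ S : Finset ℕ, Measurable (tup X S) :=
    fun S => measurable_pi_lambda _ fun j => hX j.1
  have mU : ∀ S : Finset ℕ, Measurable (tup U S) :=
    fun S => measurable_pi_lambda _ fun j => hU j.1
  by_cases hSc : Shc = ∅
  · -- degenerate case: Shc empty
    haveI hE : IsEmpty {j // j ∈ Shc} := ⟨fun j => Finset.notMem_empty j.1 (hSc ▸ j.2)⟩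
    have hz : ∀ k ∈ Shc, False := fun k hk => Finset.notMem_empty k (hSc ▸ hk)
    rw [Finset.sum_eq_zero (fun k hk => (hz k hk).elim),
        Finset.sum_eq_zero (fun k hk => (hz k hk).elim)]
    have hc0 : cmi μ (fun ω => (X 1 ω, tup X Sh ω)) (tup U Shc) (tup X Shc) = 0 := by
      simp only [cmi, condEnt]
      rw [ent_unique_pair_mid μ _ (tup U Shc) (tup X Shc),
          ent_unique_pair_left μ (tup U Shc) (tup X Shc)]
      ring
    rw [hc0]; ring
  · -- main case
    have hsub : Shc ⊆ Finset.Icc 2 N := Finset.sdiff_subset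
    obtain ⟨k0, hk0⟩ := Finset.nonempty_iff_ne_empty.2 hSc
    have hN : 2 ≤ N := by
      have := Finset.mem_Icc.1 (hsub hk0); omega
    have h1N : (1 : ℕ) ∈ Finset.Icc 1 N := Finset.mem_Icc.2 ⟨le_refl 1, by omega⟩
    have hsub1 : Finset.Icc 2 N ⊆ Finset.Icc 1 N := by
      intro j hj; rw [Finset.mem_Icc] at *; omega
    have hShsub : Sh ⊆ Finset.Icc 1 N := hSh.trans hsub1
    have hShcsub : Shc ⊆ Finset.Icc 1 N := hsub.trans hsub1
    have hcover : ∀ j ∈ Finset.Icc 1 N, j = 1 ∨ j ∈ Sh ∨ j ∈ Shc := by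
      intro j hj
      by_cases hj1 : j = 1
      · exact Or.inl hj1
      · refine Or.inr ?_
        have hj2 : j ∈ Finset.Icc 2 N := by rw [Finset.mem_Icc] at *; omega
        by_cases hjS : j ∈ Sh
        · exact Or.inl hjS
        · exact Or.inr (Finset.mem_sdiff.2 ⟨hj2, hjS⟩)
    set F : Finset ℕ → ℝ := fun T => ent μ (fun ω => (tup U T ω, tup X Shc ω)) with hF
    set Hn : Finset ℕ → ℝ :=
      fun T => ent μ (fun ω => (tup U T ω, tup X (Finset.Icc 1 N) ω)) with hHn
    set D : ℕ → ℝ := fun k =>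
      ent μ (fun ω => (U k ω, (Y k ω, X k ω))) - ent μ (fun ω => (Y k ω, X k ω)) with hD
    -- Markov in entropy form, for subtuples
    have markov' : ∀ T : Finset ℕ, T ⊆ Finset.Icc 2 N → ∀ k ∈ Finset.Icc 2 N,
        ent μ (fun ω => (tup U T ω, (tup X (Finset.Icc 1 N) ω, Y k ω)))
            + ent μ (tup X (Finset.Icc 1 N))
          = Hn T + ent μ (fun ω => (tup X (Finset.Icc 1 N) ω, Y k ω)) := by
      intro T hT k hk
      refine ent_markov μ (tup U T) (tup X (Finset.Icc 1 N)) (Y k)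
        (mU T) (mX _) (hY k) ?_
      intro v x y
      have hUT : Measurable (tup U T) := mU T
      have e1 : pr μ (fun ω => (tup U T ω, (tup X (Finset.Icc 1 N) ω, Y k ω))) (v, (x, y))
          = ∑ u : {j // j ∈ Finset.Icc 2 N} → β,
              pr μ (fun ω => (tup U (Finset.Icc 2 N) ω,
                (tup U T ω, (tup X (Finset.Icc 1 N) ω, Y k ω)))) (u, (v, (x, y))) :=
        (pr_sum_fst μ (tup U (Finset.Icc 2 N))
          (fun ω => (tup U T ω, (tup X (Finset.Icc 1 N) ω, Y k ω)))
          (mU _) (hUT.prodMk ((mX _).prodMk (hY k))) (v, (x, y))).symm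
      have e2 : pr μ (fun ω => (tup U T ω, tup X (Finset.Icc 1 N) ω)) (v, x)
          = ∑ u : {j // j ∈ Finset.Icc 2 N} → β,
              pr μ (fun ω => (tup U (Finset.Icc 2 N) ω,
                (tup U T ω, tup X (Finset.Icc 1 N) ω))) (u, (v, x)) :=
        (pr_sum_fst μ (tup U (Finset.Icc 2 N))
          (fun ω => (tup U T ω, tup X (Finset.Icc 1 N) ω))
          (mU _) (hUT.prodMk (mX _)) (v, x)).symm
      rw [e1, e2, Finset.sum_mul, Finset.sum_mul]
      refine Finset.sum_congr rfl fun u _ => ?_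
      by_cases h : (fun j : {j // j ∈ T} => u ⟨j.1, hT j.2⟩) = v
      · rw [pr_tup_pair_eq μ U T (Finset.Icc 2 N) hT _ u v (x, y) h,
            pr_tup_pair_eq μ U T (Finset.Icc 2 N) hT _ u v x h]
        exact hmarkov k hk u x y
      · rw [pr_tup_pair_ne μ U T (Finset.Icc 2 N) hT _ u v (x, y) h,
            pr_tup_pair_ne μ U T (Finset.Icc 2 N) hT _ u v x h]
        ring
    -- per-term identity, LHS
    have lhs_eq : ∀ k ∈ Shc,
        cmi μ (U k) (fun ω => (tup U (Shc.filter (· < k)) ω, tup X Shc ω)) (X k)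
            - cmi μ (U k) (Y k) (X k)
          = (F (Shc.filter (· < k)) - F (insert k (Shc.filter (· < k)))) + D k := by
      intro k hk
      set T : Finset ℕ := Shc.filter (· < k) with hT
      have h1 : ent μ (fun ω => (U k ω, ((tup U T ω, tup X Shc ω), X k ω)))
          = F (insert k T) := by
        have hi : Function.Injective
            (fun vx : ({j // j ∈ insert k T} → β) × ({j // j ∈ Shc} → α) =>
              (vx.1 ⟨k, Finset.mem_insert_self k T⟩,
                ((fun j : {j // j ∈ T} => vx.1 ⟨j.1, Finset.mem_insert_of_mem j.2⟩, vx.2),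
                  vx.2 ⟨k, hk⟩))) := by
          rintro ⟨v, x⟩ ⟨v', x'⟩ hvx
          simp only [Prod.mk.injEq] at hvx ⊢
          obtain ⟨ha, ⟨hb, hcx⟩, -⟩ := hvx
          refine ⟨funext fun j => ?_, hcx⟩
          rcases Finset.mem_insert.1 j.2 with hj | hj
          · have hjk : j = ⟨k, Finset.mem_insert_self k T⟩ := Subtype.ext hj
            rw [hjk]; exact ha
          · exact congrFun hb ⟨j.1, hj⟩
        exact ent_comp_inj μ _ hi (fun ω => (tup U (insert k T) ω, tup X Shc ω))
      have h2 : ent μ (fun ω => ((tup U T ω, tup X Shc ω), X k ω)) = F T := by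
        have hi : Function.Injective
            (fun vx : ({j // j ∈ T} → β) × ({j // j ∈ Shc} → α) =>
              ((vx.1, vx.2), vx.2 ⟨k, hk⟩)) := by
          rintro ⟨v, x⟩ ⟨v', x'⟩ hvx
          simp only [Prod.mk.injEq] at hvx ⊢
          exact ⟨hvx.1.1, hvx.1.2⟩
        exact ent_comp_inj μ _ hi (fun ω => (tup U T ω, tup X Shc ω))
      simp only [cmi, condEnt]
      rw [h1, h2]
      simp only [hD]
      ring
    -- per-term identity, RHS
    have rhs_eq : ∀ k ∈ Shc,
        cmi μ (U k) (fun ω => (tup U (Shc.filter (· < k)) ω, tup X (Finset.Icc 1 N) ω))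
            (fun ω => (X k ω, Y k ω))
          = (Hn (Shc.filter (· < k)) - Hn (insert k (Shc.filter (· < k)))) + D k := by
      intro k hk
      have hkS : k ∈ Finset.Icc 2 N := hsub hk
      have hk1N : k ∈ Finset.Icc 1 N := hsub1 hkS
      set T : Finset ℕ := Shc.filter (· < k) with hT
      have hTsub : T ⊆ Finset.Icc 2 N := (Finset.filter_subset _ _).trans hsub
      have ha : ent μ (fun ω => (U k ω, (X k ω, Y k ω)))
          = ent μ (fun ω => (U k ω, (Y k ω, X k ω))) := by
        have hi : Function.Injective
            (fun p : β × (γ × α) => (p.1, (p.2.2, p.2.1))) := by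
          rintro ⟨u, y, x⟩ ⟨u', y', x'⟩ h
          simp only [Prod.mk.injEq] at h ⊢
          tauto
        exact ent_comp_inj μ _ hi (fun ω => (U k ω, (Y k ω, X k ω)))
      have hb : ent μ (fun ω => (X k ω, Y k ω)) = ent μ (fun ω => (Y k ω, X k ω)) := by
        have hi : Function.Injective (fun p : γ × α => (p.2, p.1)) := by
          rintro ⟨y, x⟩ ⟨y', x'⟩ h
          simp only [Prod.mk.injEq] at h ⊢
          tauto
        exact ent_comp_inj μ _ hi (fun ω => (Y k ω, X k ω))
      have hc : ent μ (fun ω =>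
            (U k ω, ((tup U T ω, tup X (Finset.Icc 1 N) ω), (X k ω, Y k ω))))
          = ent μ (fun ω => (tup U (insert k T) ω, (tup X (Finset.Icc 1 N) ω, Y k ω))) := by
        have hi : Function.Injective
            (fun vx : ({j // j ∈ insert k T} → β) × (({j // j ∈ Finset.Icc 1 N} → α) × γ) =>
              (vx.1 ⟨k, Finset.mem_insert_self k T⟩,
                ((fun j : {j // j ∈ T} => vx.1 ⟨j.1, Finset.mem_insert_of_mem j.2⟩, vx.2.1),
                  (vx.2.1 ⟨k, hk1N⟩, vx.2.2)))) := by
          rintro ⟨v, x, y⟩ ⟨v', x', y'⟩ hvx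
          simp only [Prod.mk.injEq] at hvx ⊢
          obtain ⟨ha', ⟨hb', hcx⟩, -, hdy⟩ := hvx
          refine ⟨funext fun j => ?_, hcx, hdy⟩
          rcases Finset.mem_insert.1 j.2 with hj | hj
          · have hjk : j = ⟨k, Finset.mem_insert_self k T⟩ := Subtype.ext hj
            rw [hjk]; exact ha'
          · exact congrFun hb' ⟨j.1, hj⟩
        exact ent_comp_inj μ _ hi
          (fun ω => (tup U (insert k T) ω, (tup X (Finset.Icc 1 N) ω, Y k ω)))
      have hd : ent μ (fun ω =>
            ((tup U T ω, tup X (Finset.Icc 1 N) ω), (X k ω, Y k ω)))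
          = ent μ (fun ω => (tup U T ω, (tup X (Finset.Icc 1 N) ω, Y k ω))) := by
        have hi : Function.Injective
            (fun vx : ({j // j ∈ T} → β) × (({j // j ∈ Finset.Icc 1 N} → α) × γ) =>
              ((vx.1, vx.2.1), (vx.2.1 ⟨k, hk1N⟩, vx.2.2))) := by
          rintro ⟨v, x, y⟩ ⟨v', x', y'⟩ hvx
          simp only [Prod.mk.injEq] at hvx ⊢
          tauto
        exact ent_comp_inj μ _ hi
          (fun ω => (tup U T ω, (tup X (Finset.Icc 1 N) ω, Y k ω)))
      have hm1 := markov' T hTsub k hkS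
      have hm2 := markov' (insert k T) (Finset.insert_subset hkS hTsub) k hkS
      simp only [cmi, condEnt]
      rw [ha, hb, hc, hd]
      simp only [hD]
      linarith [hm1, hm2]
    -- final conditional mutual information
    have final_eq : cmi μ (fun ω => (X 1 ω, tup X Sh ω)) (tup U Shc) (tup X Shc)
        = (ent μ (tup X (Finset.Icc 1 N)) - ent μ (tup X Shc)) - (Hn Shc - F Shc) := by
      have hv : ent μ (fun ω => ((X 1 ω, tup X Sh ω), tup X Shc ω))
          = ent μ (tup X (Finset.Icc 1 N)) := by
        have hi : Function.Injective
            (fun x : {j // j ∈ Finset.Icc 1 N} → α =>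
              ((x ⟨1, h1N⟩, fun j : {j // j ∈ Sh} => x ⟨j.1, hShsub j.2⟩),
                fun j : {j // j ∈ Shc} => x ⟨j.1, hShcsub j.2⟩)) := by
          intro x x' h
          simp only [Prod.mk.injEq] at h
          obtain ⟨⟨ha', hb'⟩, hc'⟩ := h
          funext j
          rcases hcover j.1 j.2 with hj | hj | hj
          · have hjk : j = ⟨1, h1N⟩ := Subtype.ext hj
            rw [hjk]; exact ha'
          · exact congrFun hb' ⟨j.1, hj⟩
          · exact congrFun hc' ⟨j.1, hj⟩
        exact ent_comp_inj μ _ hi (tup X (Finset.Icc 1 N))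
      have hw : ent μ (fun ω => ((X 1 ω, tup X Sh ω), (tup U Shc ω, tup X Shc ω)))
          = Hn Shc := by
        have hi : Function.Injective
            (fun ux : ({j // j ∈ Shc} → β) × ({j // j ∈ Finset.Icc 1 N} → α) =>
              ((ux.2 ⟨1, h1N⟩, fun j : {j // j ∈ Sh} => ux.2 ⟨j.1, hShsub j.2⟩),
                (ux.1, fun j : {j // j ∈ Shc} => ux.2 ⟨j.1, hShcsub j.2⟩))) := by
          rintro ⟨u, x⟩ ⟨u', x'⟩ h
          simp only [Prod.mk.injEq] at h ⊢
          obtain ⟨⟨ha', hb'⟩, hu, hc'⟩ := h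
          refine ⟨hu, funext fun j => ?_⟩
          rcases hcover j.1 j.2 with hj | hj | hj
          · have hjk : j = ⟨1, h1N⟩ := Subtype.ext hj
            rw [hjk]; exact ha'
          · exact congrFun hb' ⟨j.1, hj⟩
          · exact congrFun hc' ⟨j.1, hj⟩
        exact ent_comp_inj μ _ hi (fun ω => (tup U Shc ω, tup X (Finset.Icc 1 N) ω))
      simp only [cmi, condEnt]
      rw [hv, hw]
      all_goals simp only [hF]
      all_goals ring
    haveI hE0 : IsEmpty {j // j ∈ (∅ : Finset ℕ)} := ⟨fun j => Finset.notMem_empty j.1 j.2⟩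
    have hF0 : F ∅ = ent μ (tup X Shc) :=
      ent_unique_pair_left μ (tup U ∅) (tup X Shc)
    have hHn0 : Hn ∅ = ent μ (tup X (Finset.Icc 1 N)) :=
      ent_unique_pair_left μ (tup U ∅) (tup X (Finset.Icc 1 N))
    have hL : ∑ k ∈ Shc,
        (cmi μ (U k) (fun ω => (tup U (Shc.filter (· < k)) ω, tup X Shc ω)) (X k)
          - cmi μ (U k) (Y k) (X k))
        = (F ∅ - F Shc) + ∑ k ∈ Shc, D k := by
      rw [Finset.sum_congr rfl lhs_eq, Finset.sum_add_distrib, telescope Shc F]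
    have hR : ∑ k ∈ Shc,
        cmi μ (U k) (fun ω => (tup U (Shc.filter (· < k)) ω, tup X (Finset.Icc 1 N) ω))
          (fun ω => (X k ω, Y k ω))
        = (Hn ∅ - Hn Shc) + ∑ k ∈ Shc, D k := by
      rw [Finset.sum_congr rfl rhs_eq, Finset.sum_add_distrib, telescope Shc Hn]
    rw [hL, hR, final_eq, hF0, hHn0]
    ring
end
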